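/- arXiv:0912.3535 — 5 statements merged into one kernel-verified Lean document; each statement's English description precedes it below -/
import Mathlib

section
/- Let (M, HM, VM, g) be an sRC-manifold with canonical connection ∇ such that VM is normal (the tensor B^(0) vanishes) and integrable. Then for all horizontal vector fields X, Y, Z, W with at least three of them horizontal, Rm(X,Y,Z,W) = Rm(Z,W,X,Y), where Rm is the curvature tensor of ∇. -/
/-- Abstract model of the calculus of smooth vector fields on a manifold:
`F` plays the role of the ring of smooth functions, `V` the space of vector
fields, `D` the derivation action of vector fields on functions, `bracket`
the Lie bracket and `g` a Riemannian metric. -/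
structure VFCalc (F : Type*) (V : Type*) [CommRing F] [Algebra ℝ F]
    [AddCommGroup V] [Module F V] where
  D : V → F → F
  D_add : ∀ X f h, D X (f + h) = D X f + D X h
  D_mul : ∀ X f h, D X (f * h) = f * D X h + h * D X f
  D_addX : ∀ X Y f, D (X + Y) f = D X f + D Y f
  D_smulX : ∀ (f : F) (X : V) (h : F), D (f • X) h = f * D X h
  bracket : V → V → V
  bracket_antisymm : ∀ X Y, bracket X Y = -bracket Y X
  bracket_addl : ∀ X Y Z, bracket (X + Y) Z = bracket X Z + bracket Y Z
  bracket_leibniz : ∀ (X : V) (f : F) (Y : V),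
    bracket X (f • Y) = f • bracket X Y + (D X f) • Y
  jacobi : ∀ X Y Z,
    bracket X (bracket Y Z) + bracket Y (bracket Z X) + bracket Z (bracket X Y) = 0
  D_bracket : ∀ X Y f, D (bracket X Y) f = D X (D Y f) - D Y (D X f)
  g : V → V → F
  g_symm : ∀ X Y, g X Y = g Y X
  g_addl : ∀ X Y Z, g (X + Y) Z = g X Z + g Y Z
  g_smull : ∀ (f : F) (X Y : V), g (f • X) Y = f * g X Y

namespace VFCalc

variable {F : Type*} {V : Type*} [CommRing F] [Algebra ℝ F]
  [AddCommGroup V] [Module F V]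

/-- `nab` is an affine connection on vector fields. -/
structure IsConnection (S : VFCalc F V) (nab : V → V → V) : Prop where
  addX : ∀ X Y Z, nab (X + Y) Z = nab X Z + nab Y Z
  smulX : ∀ (f : F) (X Y : V), nab (f • X) Y = f • nab X Y
  addY : ∀ X Y Z, nab X (Y + Z) = nab X Y + nab X Z
  leibniz : ∀ (X : V) (f : F) (Y : V), nab X (f • Y) = f • nab X Y + (S.D X f) • Y

/-- The torsion `Tor(X,Y) = ∇_X Y - ∇_Y X - [X,Y]` of a connection. -/
def tor (S : VFCalc F V) (nab : V → V → V) (X Y : V) : V :=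
  nab X Y - nab Y X - S.bracket X Y

/-- The curvature operator `R(X,Y)Z = ∇_X ∇_Y Z - ∇_Y ∇_X Z - ∇_{[X,Y]} Z`. -/
def curv (S : VFCalc F V) (nab : V → V → V) (X Y Z : V) : V :=
  nab X (nab Y Z) - nab Y (nab X Z) - nab (S.bracket X Y) Z

/-- The (4,0) curvature tensor `Rm(A,B,C,D) = ⟨R(A,B)C, D⟩`. -/
def Rm (S : VFCalc F V) (nab : V → V → V) (A B C D : V) : F :=
  S.g (curv S nab A B C) D

/-- Metric compatibility of a connection: `∇ g = 0`. -/
def MetricCompat (S : VFCalc F V) (nab : V → V → V) : Prop :=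
  ∀ X Y Z, S.D X (S.g Y Z) = S.g (nab X Y) Z + S.g Y (nab X Z)

/-- The covariant derivative of the torsion: `(∇_X Tor)(Y,Z)`. -/
def nabTor (S : VFCalc F V) (nab : V → V → V) (X Y Z : V) : V :=
  nab X (tor S nab Y Z) - tor S nab (nab X Y) Z - tor S nab Y (nab X Z)

end VFCalc
/-- An sRC decomposition `TM = HM ⊕ VM`, recorded via the two orthogonal
projections `H` (horizontal) and `Vp` (vertical). -/
structure TwoGrading {F : Type*} {V : Type*} [CommRing F] [Algebra ℝ F]
    [AddCommGroup V] [Module F V] (S : VFCalc F V) where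
  H : V → V
  Vp : V → V
  H_add : ∀ X Y, H (X + Y) = H X + H Y
  H_smul : ∀ (f : F) (X : V), H (f • X) = f • H X
  Vp_add : ∀ X Y, Vp (X + Y) = Vp X + Vp Y
  Vp_smul : ∀ (f : F) (X : V), Vp (f • X) = f • Vp X
  sum_eq : ∀ X, H X + Vp X = X
  H_H : ∀ X, H (H X) = H X
  H_Vp : ∀ X, H (Vp X) = 0
  orth : ∀ X Y, S.g (H X) (Vp Y) = 0

namespace VFCalc

variable {F : Type*} {V : Type*} [CommRing F] [Algebra ℝ F]
  [AddCommGroup V] [Module F V]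

/-- `nab` is the canonical (basic) connection of the sRC-manifold: metric
compatible, `HM` and `VM` parallel, `Tor(HM,HM) ⊆ VM`, `Tor(VM,VM) ⊆ HM`,
and the torsion symmetries. -/
structure IsCanonical (S : VFCalc F V) (G : TwoGrading S) (nab : V → V → V) : Prop where
  conn : IsConnection S nab
  metric : MetricCompat S nab
  parH : ∀ X Y, nab X (G.H Y) = G.H (nab X Y)
  torHH : ∀ X Y, G.H (tor S nab (G.H X) (G.H Y)) = 0
  torVV : ∀ X Y, G.Vp (tor S nab (G.Vp X) (G.Vp Y)) = 0
  torSymH : ∀ X Z T, S.g (tor S nab (G.H X) (G.Vp T)) (G.H Z)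
      = S.g (tor S nab (G.H Z) (G.Vp T)) (G.H X)
  torSymV : ∀ X Z T, S.g (tor S nab (G.Vp X) (G.H T)) (G.Vp Z)
      = S.g (tor S nab (G.Vp Z) (G.H T)) (G.Vp X)

/-- Normality of the vertical complement: the tensor
`B(X,Y,T) = T⟨X,Y⟩ + ⟨[X,T],Y⟩ + ⟨[Y,T],X⟩` vanishes for horizontal `X,Y`
and vertical `T`. -/
def NormalV (S : VFCalc F V) (G : TwoGrading S) : Prop :=
  ∀ X Y T, G.H X = X → G.H Y = Y → G.Vp T = T →
    S.D T (S.g X Y) + S.g (S.bracket X T) Y + S.g (S.bracket Y T) X = 0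

/-- `1`-normality (for the basic grading): the tensor `B⁽¹⁾` vanishes,
i.e. `T⟨X,Y⟩ + ⟨[X,T],Y⟩ + ⟨[Y,T],X⟩ = 0` for vertical `X,Y` and horizontal `T`. -/
def NormalH (S : VFCalc F V) (G : TwoGrading S) : Prop :=
  ∀ X Y T, G.Vp X = X → G.Vp Y = Y → G.H T = T →
    S.D T (S.g X Y) + S.g (S.bracket X T) Y + S.g (S.bracket Y T) X = 0

/-- Integrability of the vertical bundle: `[VM,VM] ⊆ VM`. -/
def IntegrableV (S : VFCalc F V) (G : TwoGrading S) : Prop :=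
  ∀ X Y, G.H (S.bracket (G.Vp X) (G.Vp Y)) = 0

/-- A (global) horizontal orthonormal frame. -/
def IsHFrame (S : VFCalc F V) (G : TwoGrading S) {d : ℕ} (E : Fin d → V) : Prop :=
  (∀ i, G.H (E i) = E i) ∧ (∀ i j, S.g (E i) (E j) = if i = j then 1 else 0) ∧
    (∀ X, G.H X = X → X = ∑ i, S.g X (E i) • E i)

/-- A (global) vertical orthonormal frame. -/
def IsVFrame (S : VFCalc F V) (G : TwoGrading S) {m : ℕ} (U : Fin m → V) : Prop :=
  (∀ a, G.Vp (U a) = U a) ∧ (∀ a b, S.g (U a) (U b) = if a = b then 1 else 0) ∧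
    (∀ X, G.Vp X = X → X = ∑ a, S.g X (U a) • U a)

/-- The subRiemannian Ricci curvature `Rc(A,B) = Σ_k Rm(A,E_k,E_k,B)`. -/
def Ric (S : VFCalc F V) (nab : V → V → V) {d : ℕ} (E : Fin d → V) (A B : V) : F :=
  ∑ k, Rm S nab A (E k) (E k) B

end VFCalc

section AuxSRC
open VFCalc

variable {F : Type*} {V : Type*} [CommRing F] [Algebra ℝ F]
  [AddCommGroup V] [Module F V]

lemma aux_half_cancel {x : F} (h : x + x = 0) : x = 0 := by
  have h2 : ((2:ℝ)) • x = 0 := by rw [two_smul]; exact h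
  calc x = (2⁻¹ : ℝ) • ((2:ℝ) • x) := by rw [smul_smul]; norm_num
    _ = 0 := by rw [h2, smul_zero]

variable (S : VFCalc F V)

lemma aux_D_zero (X : V) : S.D X 0 = 0 := by
  have h := S.D_add X 0 0
  rw [add_zero] at h
  linear_combination -h

lemma aux_g_addr (X Y Z : V) : S.g X (Y + Z) = S.g X Y + S.g X Z := by
  rw [S.g_symm X (Y + Z), S.g_addl, S.g_symm Y X, S.g_symm Z X]

lemma aux_g_negl (X Y : V) : S.g (-X) Y = -S.g X Y := by
  rw [← neg_one_smul F X, S.g_smull]; ring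

lemma aux_g_negr (X Y : V) : S.g X (-Y) = -S.g X Y := by
  rw [S.g_symm X (-Y), aux_g_negl, S.g_symm Y X]

lemma aux_g_subl (X Y Z : V) : S.g (X - Y) Z = S.g X Z - S.g Y Z := by
  rw [sub_eq_add_neg, S.g_addl, aux_g_negl]; ring

lemma aux_g_subr (X Y Z : V) : S.g X (Y - Z) = S.g X Y - S.g X Z := by
  rw [sub_eq_add_neg, aux_g_addr, aux_g_negr]; ring

lemma aux_br_addr (X Y Z : V) :
    S.bracket X (Y + Z) = S.bracket X Y + S.bracket X Z := by
  rw [S.bracket_antisymm X (Y + Z), S.bracket_addl, S.bracket_antisymm Y X,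
    S.bracket_antisymm Z X]
  abel

lemma aux_br_zerol (Y : V) : S.bracket 0 Y = 0 := by
  have h := S.bracket_addl 0 0 Y
  rw [add_zero] at h
  rwa [left_eq_add] at h

lemma aux_br_zeror (X : V) : S.bracket X 0 = 0 := by
  rw [S.bracket_antisymm, aux_br_zerol, neg_zero]

lemma aux_br_negl (X Y : V) : S.bracket (-X) Y = -S.bracket X Y := by
  have h := S.bracket_addl X (-X) Y
  rw [add_neg_cancel, aux_br_zerol] at h
  exact (neg_eq_of_add_eq_zero_right h.symm).symm

lemma aux_br_negr (X Y : V) : S.bracket X (-Y) = -S.bracket X Y := by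
  rw [S.bracket_antisymm X (-Y), aux_br_negl, S.bracket_antisymm Y X, neg_neg]

lemma aux_br_subl (X Y Z : V) :
    S.bracket (X - Y) Z = S.bracket X Z - S.bracket Y Z := by
  rw [sub_eq_add_neg, S.bracket_addl, aux_br_negl]; abel

lemma aux_br_subr (X Y Z : V) :
    S.bracket X (Y - Z) = S.bracket X Y - S.bracket X Z := by
  rw [sub_eq_add_neg, aux_br_addr, aux_br_negr]; abel

variable {nab : V → V → V}

lemma aux_nab_zeroY (hc : IsConnection S nab) (X : V) : nab X 0 = 0 := by
  have h := hc.addY X 0 0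
  rw [add_zero] at h
  rwa [left_eq_add] at h

lemma aux_nab_negY (hc : IsConnection S nab) (X Y : V) : nab X (-Y) = -nab X Y := by
  have h := hc.addY X Y (-Y)
  rw [add_neg_cancel, aux_nab_zeroY S hc] at h
  exact (neg_eq_of_add_eq_zero_right h.symm).symm

lemma aux_nab_subY (hc : IsConnection S nab) (X Y Z : V) :
    nab X (Y - Z) = nab X Y - nab X Z := by
  rw [sub_eq_add_neg, hc.addY, aux_nab_negY S hc]; abel

lemma aux_nab_zeroX (hc : IsConnection S nab) (Y : V) : nab 0 Y = 0 := by
  have h := hc.addX 0 0 Y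
  rw [add_zero] at h
  rwa [left_eq_add] at h

lemma aux_nab_negX (hc : IsConnection S nab) (X Y : V) : nab (-X) Y = -nab X Y := by
  have h := hc.addX X (-X) Y
  rw [add_neg_cancel, aux_nab_zeroX S hc] at h
  exact (neg_eq_of_add_eq_zero_right h.symm).symm

lemma aux_nab_subX (hc : IsConnection S nab) (X Y Z : V) :
    nab (X - Y) Z = nab X Z - nab Y Z := by
  rw [sub_eq_add_neg, hc.addX, aux_nab_negX S hc]; abel

variable (G : TwoGrading S)

lemma aux_Vp_eq (X : V) : G.Vp X = X - G.H X := by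
  have h := G.sum_eq X
  rw [add_comm] at h
  exact eq_sub_of_add_eq h

lemma aux_H_zero : G.H 0 = 0 := by
  have h := G.H_add 0 0
  rw [add_zero] at h
  rwa [left_eq_add] at h

lemma aux_H_neg (X : V) : G.H (-X) = -G.H X := by
  have h := G.H_add X (-X)
  rw [add_neg_cancel, aux_H_zero] at h
  exact (neg_eq_of_add_eq_zero_right h.symm).symm

lemma aux_H_sub (X Y : V) : G.H (X - Y) = G.H X - G.H Y := by
  rw [sub_eq_add_neg, G.H_add, aux_H_neg]; abel

lemma aux_Vp_H (X : V) : G.Vp (G.H X) = 0 := by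
  have h := G.sum_eq (G.H X)
  rwa [G.H_H, add_eq_left] at h

lemma aux_Vp_Vp (X : V) : G.Vp (G.Vp X) = G.Vp X := by
  have h := G.sum_eq (G.Vp X)
  rwa [G.H_Vp, zero_add] at h

lemma aux_g_HV {X T : V} (hX : G.H X = X) (hT : G.Vp T = T) : S.g X T = 0 := by
  conv_lhs => rw [← hX, ← hT]
  exact G.orth X T

lemma aux_g_VH {T X : V} (hT : G.Vp T = T) (hX : G.H X = X) : S.g T X = 0 := by
  rw [S.g_symm]
  exact aux_g_HV S G hX hT

lemma aux_g_of_Hzero {t w : V} (ht : G.H t = 0) (hw : G.H w = w) : S.g t w = 0 := by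
  have hv : G.Vp t = t := by
    have h := G.sum_eq t
    rwa [ht, zero_add] at h
  exact aux_g_VH S G hv hw

variable {G}

lemma aux_nab_H (hcan : IsCanonical S G nab) {Y : V} (hY : G.H Y = Y) (X : V) :
    G.H (nab X Y) = nab X Y := by
  have h := hcan.parH X Y
  rw [hY] at h
  exact h.symm

lemma aux_parV (hcan : IsCanonical S G nab) (X Y : V) :
    nab X (G.Vp Y) = G.Vp (nab X Y) := by
  rw [aux_Vp_eq S G Y, aux_nab_subY S hcan.conn, hcan.parH, aux_Vp_eq S G (nab X Y)]

lemma aux_nab_V (hcan : IsCanonical S G nab) {Y : V} (hY : G.Vp Y = Y) (X : V) :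
    G.Vp (nab X Y) = nab X Y := by
  have h := aux_parV S hcan X Y
  rw [hY] at h
  exact h.symm

lemma aux_tor_antisymm (X Y : V) : tor S nab X Y = -tor S nab Y X := by
  simp only [tor]
  rw [S.bracket_antisymm X Y]
  abel

lemma aux_tor_addl (hc : IsConnection S nab) (X X' Y : V) :
    tor S nab (X + X') Y = tor S nab X Y + tor S nab X' Y := by
  simp only [tor, hc.addX, hc.addY, S.bracket_addl]
  abel

lemma aux_tor_addr (hc : IsConnection S nab) (X Y Y' : V) :
    tor S nab X (Y + Y') = tor S nab X Y + tor S nab X Y' := by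
  simp only [tor, hc.addX, hc.addY, aux_br_addr]
  abel

lemma aux_curv_antisymm (hc : IsConnection S nab) (A B C : V) :
    curv S nab A B C = -curv S nab B A C := by
  simp only [curv]
  rw [S.bracket_antisymm A B, aux_nab_negX S hc]
  abel

lemma aux_curv_addB (hc : IsConnection S nab) (A B B' C : V) :
    curv S nab A (B + B') C = curv S nab A B C + curv S nab A B' C := by
  simp only [curv, hc.addX, hc.addY, aux_br_addr]
  abel

lemma aux_H_curv (hcan : IsCanonical S G nab) {C : V} (hC : G.H C = C) (A B : V) :
    G.H (curv S nab A B C) = curv S nab A B C := by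
  simp only [curv]
  rw [aux_H_sub, aux_H_sub,
    aux_nab_H S hcan (aux_nab_H S hcan hC B) A,
    aux_nab_H S hcan (aux_nab_H S hcan hC A) B,
    aux_nab_H S hcan hC (S.bracket A B)]

lemma aux_Vp_curv (hcan : IsCanonical S G nab) {C : V} (hC : G.Vp C = C) (A B : V) :
    G.Vp (curv S nab A B C) = curv S nab A B C := by
  have hv : ∀ X (Y : V), G.Vp Y = Y → G.Vp (nab X Y) = nab X Y := by
    intro X Y hY; exact aux_nab_V S hcan hY X
  simp only [curv]
  have hVp_sub : ∀ X Y : V, G.Vp (X - Y) = G.Vp X - G.Vp Y := by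
    intro X Y
    rw [aux_Vp_eq S G (X - Y), aux_H_sub, aux_Vp_eq S G X, aux_Vp_eq S G Y]
    abel
  rw [hVp_sub, hVp_sub,
    hv A _ (hv B C hC), hv B _ (hv A C hC), hv (S.bracket A B) C hC]

lemma aux_Rm_anti12 (hc : IsConnection S nab) (A B C D : V) :
    Rm S nab A B C D = -Rm S nab B A C D := by
  simp only [Rm]
  rw [aux_curv_antisymm S hc A B C, aux_g_negl]

lemma aux_curv_metric (hm : MetricCompat S nab) (A B C D : V) :
    S.g (curv S nab A B C) D + S.g C (curv S nab A B D) = 0 := by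
  have c1 := hm A (nab B C) D
  have c2 := hm A C (nab B D)
  have c3 := hm B (nab A C) D
  have c4 := hm B C (nab A D)
  have c5 := hm (S.bracket A B) C D
  have c6 := S.D_bracket A B (S.g C D)
  have c7 : S.D A (S.D B (S.g C D))
      = S.D A (S.g (nab B C) D) + S.D A (S.g C (nab B D)) := by
    rw [hm B C D, S.D_add]
  have c8 : S.D B (S.D A (S.g C D))
      = S.D B (S.g (nab A C) D) + S.D B (S.g C (nab A D)) := by
    rw [hm A C D, S.D_add]
  simp only [curv]
  rw [aux_g_subl, aux_g_subl, aux_g_subr, aux_g_subr]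
  linear_combination (-c1) - c2 + c3 + c4 - c7 + c8 - c6 + c5

lemma aux_Rm_anti34 (hm : MetricCompat S nab) (A B C D : V) :
    Rm S nab A B C D = -Rm S nab A B D C := by
  have h := aux_curv_metric S hm A B C D
  have e := S.g_symm C (curv S nab A B D)
  simp only [Rm]
  linear_combination h - e

lemma aux_gvert_nab (hcan : IsCanonical S G nab) {A w : V}
    (hA : ∀ u, G.H u = u → S.g A u = 0) (hw : G.H w = w) (X : V) :
    S.g (nab X A) w = 0 := by
  have h := hcan.metric X A w
  rw [hA w hw, aux_D_zero, hA (nab X w) (aux_nab_H S hcan hw X)] at h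
  linear_combination -h

lemma aux_gvert_torHV (hcan : IsCanonical S G nab) (hnormal : NormalV S G)
    {X T w : V} (hX : G.H X = X) (hT : G.Vp T = T) (hw : G.H w = w) :
    S.g (tor S nab X T) w = 0 := by
  have hn := hnormal X w T hX hw hT
  have hb1 : S.bracket X T = nab X T - nab T X - tor S nab X T := by
    simp only [tor]; abel
  have hb2 : S.bracket w T = nab w T - nab T w - tor S nab w T := by
    simp only [tor]; abel
  have hm1 := hcan.metric T X w
  have hv1 : S.g (nab X T) w = 0 :=
    aux_g_VH S G (aux_nab_V S hcan hT X) hw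
  have hv2 : S.g (nab w T) X = 0 :=
    aux_g_VH S G (aux_nab_V S hcan hT w) hX
  rw [hb1, hb2] at hn
  rw [aux_g_subl, aux_g_subl, aux_g_subl, aux_g_subl] at hn
  have e := S.g_symm (nab T w) X
  have key : S.g (tor S nab X T) w + S.g (tor S nab w T) X = 0 := by
    linear_combination -hn + hm1 + hv1 + hv2 - e
  have hs := hcan.torSymH X w T
  rw [hX, hT, hw] at hs
  apply aux_half_cancel
  linear_combination key + hs

lemma aux_gvert_torVV (hcan : IsCanonical S G nab) (hint : IntegrableV S G)
    {A B w : V} (hA : G.Vp A = A) (hB : G.Vp B = B) (hw : G.H w = w) :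
    S.g (tor S nab A B) w = 0 := by
  apply aux_g_of_Hzero S G _ hw
  have h1 : G.H (nab A B) = 0 := by
    rw [← aux_nab_V S hcan hB A, G.H_Vp]
  have h2 : G.H (nab B A) = 0 := by
    rw [← aux_nab_V S hcan hA B, G.H_Vp]
  have h3 : G.H (S.bracket A B) = 0 := by
    have h := hint A B
    rwa [hA, hB] at h
  simp only [tor]
  rw [aux_H_sub, aux_H_sub, h1, h2, h3]
  abel

lemma aux_gvert_torHH (hcan : IsCanonical S G nab)
    {A B w : V} (hA : G.H A = A) (hB : G.H B = B) (hw : G.H w = w) :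
    S.g (tor S nab A B) w = 0 := by
  apply aux_g_of_Hzero S G _ hw
  have h := hcan.torHH A B
  rwa [hA, hB] at h

lemma aux_gvert_tor (hcan : IsCanonical S G nab) (hnormal : NormalV S G)
    (hint : IntegrableV S G) (A B : V) {w : V} (hw : G.H w = w) :
    S.g (tor S nab A B) w = 0 := by
  have hc := hcan.conn
  have split : S.g (tor S nab A B) w
      = S.g (tor S nab (G.H A) (G.H B)) w + S.g (tor S nab (G.H A) (G.Vp B)) w
        + (S.g (tor S nab (G.Vp A) (G.H B)) w + S.g (tor S nab (G.Vp A) (G.Vp B)) w) := by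
    conv_lhs => rw [← G.sum_eq A, ← G.sum_eq B]
    rw [aux_tor_addl S hc, aux_tor_addr S hc, aux_tor_addr S hc, S.g_addl,
      S.g_addl, S.g_addl]
  rw [split,
    aux_gvert_torHH S hcan (G.H_H A) (G.H_H B) hw,
    aux_gvert_torHV S hcan hnormal (G.H_H A) (aux_Vp_Vp S G B) hw,
    aux_gvert_torVV S hcan hint (aux_Vp_Vp S G A) (aux_Vp_Vp S G B) hw]
  have : S.g (tor S nab (G.Vp A) (G.H B)) w = 0 := by
    rw [aux_tor_antisymm, aux_g_negl,
      aux_gvert_torHV S hcan hnormal (G.H_H B) (aux_Vp_Vp S G A) hw, neg_zero]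
  rw [this]
  ring

lemma aux_gvert_nabTor (hcan : IsCanonical S G nab) (hnormal : NormalV S G)
    (hint : IntegrableV S G) (X Y Z : V) {w : V} (hw : G.H w = w) :
    S.g (nabTor S nab X Y Z) w = 0 := by
  simp only [nabTor]
  rw [aux_g_subl, aux_g_subl,
    aux_gvert_nab S hcan (fun u hu => aux_gvert_tor S hcan hnormal hint Y Z hu) hw X,
    aux_gvert_tor S hcan hnormal hint _ _ hw,
    aux_gvert_tor S hcan hnormal hint _ _ hw]
  ring

lemma aux_bianchi (hc : IsConnection S nab) (X Y Z : V) :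
    curv S nab X Y Z + curv S nab Y Z X + curv S nab Z X Y =
      (tor S nab (tor S nab X Y) Z + tor S nab (tor S nab Y Z) X
        + tor S nab (tor S nab Z X) Y)
      + (nabTor S nab X Y Z + nabTor S nab Y Z X + nabTor S nab Z X Y) := by
  have hJ : S.bracket (S.bracket X Y) Z + S.bracket (S.bracket Y Z) X
      + S.bracket (S.bracket Z X) Y = 0 := by
    have h := S.jacobi X Y Z
    rw [S.bracket_antisymm X (S.bracket Y Z), S.bracket_antisymm Y (S.bracket Z X),
      S.bracket_antisymm Z (S.bracket X Y)] at h
    have h4 : S.bracket (S.bracket X Y) Z + S.bracket (S.bracket Y Z) X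
        + S.bracket (S.bracket Z X) Y
        = -(-S.bracket (S.bracket Y Z) X + -S.bracket (S.bracket Z X) Y
          + -S.bracket (S.bracket X Y) Z) := by abel
    rw [h4, h, neg_zero]
  simp only [curv, tor, nabTor, aux_nab_subX S hc, aux_nab_subY S hc,
    aux_br_subl, aux_br_subr]
  rw [← sub_eq_zero]
  refine Eq.trans ?_ (neg_eq_zero.mpr hJ)
  rw [S.bracket_antisymm Z (nab Y X), S.bracket_antisymm X (nab Z Y),
    S.bracket_antisymm Y (nab X Z)]
  abel

lemma aux_bianchi_pair (hcan : IsCanonical S G nab) (hnormal : NormalV S G)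
    (hint : IntegrableV S G) (X Y Z : V) {w : V} (hw : G.H w = w) :
    Rm S nab X Y Z w + Rm S nab Y Z X w + Rm S nab Z X Y w = 0 := by
  have hb := congrArg (fun v => S.g v w) (aux_bianchi S hcan.conn X Y Z)
  simp only [S.g_addl] at hb
  rw [aux_gvert_tor S hcan hnormal hint _ _ hw,
    aux_gvert_tor S hcan hnormal hint _ _ hw,
    aux_gvert_tor S hcan hnormal hint _ _ hw,
    aux_gvert_nabTor S hcan hnormal hint _ _ _ hw,
    aux_gvert_nabTor S hcan hnormal hint _ _ _ hw,
    aux_gvert_nabTor S hcan hnormal hint _ _ _ hw] at hb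
  simp only [Rm]
  linear_combination hb

lemma aux_Rm_HV_zero (hcan : IsCanonical S G nab) {C T : V}
    (hC : G.H C = C) (hT : G.Vp T = T) (A B : V) : Rm S nab A B C T = 0 := by
  simp only [Rm]
  exact aux_g_HV S G (aux_H_curv S hcan hC A B) hT

lemma aux_Rm_VH_zero (hcan : IsCanonical S G nab) {C T : V}
    (hC : G.Vp C = C) (hT : G.H T = T) (A B : V) : Rm S nab A B C T = 0 := by
  simp only [Rm]
  exact aux_g_VH S G (aux_Vp_curv S hcan hC A B) hT

lemma aux_Rm_vert2_sym (hcan : IsCanonical S G nab) (hnormal : NormalV S G)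
    (hint : IntegrableV S G) {a b c t : V}
    (ha : G.H a = a) (hb : G.H b = b) (hc' : G.H c = c) (ht : G.Vp t = t) :
    Rm S nab a t b c = Rm S nab b t a c := by
  have h3 := aux_bianchi_pair S hcan hnormal hint a t b hc'
  have h0 : Rm S nab b a t c = 0 := aux_Rm_VH_zero S hcan ht hc' b a
  have h1 : Rm S nab t b a c = -Rm S nab b t a c :=
    aux_Rm_anti12 S hcan.conn t b a c
  linear_combination h3 - h1 - h0

lemma aux_Rm_vert2_zero (hcan : IsCanonical S G nab) (hnormal : NormalV S G)
    (hint : IntegrableV S G) {a b c t : V}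
    (ha : G.H a = a) (hb : G.H b = b) (hc' : G.H c = c) (ht : G.Vp t = t) :
    Rm S nab a t b c = 0 := by
  have e1 := aux_Rm_vert2_sym S hcan hnormal hint ha hb hc' ht
  have e2 : Rm S nab b t a c = -Rm S nab b t c a :=
    aux_Rm_anti34 S hcan.metric b t a c
  have e3 := aux_Rm_vert2_sym S hcan hnormal hint hb hc' ha ht
  have e4 : Rm S nab c t b a = -Rm S nab c t a b :=
    aux_Rm_anti34 S hcan.metric c t b a
  have e5 := aux_Rm_vert2_sym S hcan hnormal hint hc' ha hb ht
  have e6 : Rm S nab a t c b = -Rm S nab a t b c :=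
    aux_Rm_anti34 S hcan.metric a t c b
  apply aux_half_cancel
  linear_combination e1 + e2 - e3 - e4 + e5 + e6

lemma aux_Rm_pair_horiz (hcan : IsCanonical S G nab) (hnormal : NormalV S G)
    (hint : IntegrableV S G) {X Y Z W : V}
    (hx : G.H X = X) (hy : G.H Y = Y) (hz : G.H Z = Z) (hw : G.H W = W) :
    Rm S nab X Y Z W = Rm S nab Z W X Y := by
  have b1 := aux_bianchi_pair S hcan hnormal hint X Y Z hw
  have b2 := aux_bianchi_pair S hcan hnormal hint Y Z W hx
  have b3 := aux_bianchi_pair S hcan hnormal hint Z W X hy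
  have b4 := aux_bianchi_pair S hcan hnormal hint W X Y hz
  have a1 : Rm S nab Z X Y W = -Rm S nab X Z Y W := aux_Rm_anti12 S hcan.conn _ _ _ _
  have a2 : Rm S nab Y Z W X = -Rm S nab Y Z X W := aux_Rm_anti34 S hcan.metric _ _ _ _
  have a3 : Rm S nab Z W Y X = -Rm S nab Z W X Y := aux_Rm_anti34 S hcan.metric _ _ _ _
  have a4 : Rm S nab W Y Z X = Rm S nab Y W X Z := by
    rw [aux_Rm_anti12 S hcan.conn W Y Z X, aux_Rm_anti34 S hcan.metric Y W Z X, neg_neg]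
  have a5 : Rm S nab W X Z Y = Rm S nab X W Y Z := by
    rw [aux_Rm_anti12 S hcan.conn W X Z Y, aux_Rm_anti34 S hcan.metric X W Z Y, neg_neg]
  have a6 : Rm S nab X Z W Y = -Rm S nab X Z Y W := aux_Rm_anti34 S hcan.metric _ _ _ _
  have a7 : Rm S nab W X Y Z = -Rm S nab X W Y Z := aux_Rm_anti12 S hcan.conn _ _ _ _
  have a8 : Rm S nab X Y W Z = -Rm S nab X Y Z W := aux_Rm_anti34 S hcan.metric _ _ _ _
  have h2 : (Rm S nab X Y Z W - Rm S nab Z W X Y)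
      + (Rm S nab X Y Z W - Rm S nab Z W X Y) = 0 := by
    linear_combination b1 - a1 + b2 - a2 - a3 - a4 - b3 + a5 + a6 - b4 + a7 + a8
  have h3 := aux_half_cancel h2
  linear_combination h3

lemma aux_core (hcan : IsCanonical S G nab) (hnormal : NormalV S G)
    (hint : IntegrableV S G) {X Y Z : V} (W : V)
    (hx : G.H X = X) (hy : G.H Y = Y) (hz : G.H Z = Z) :
    Rm S nab X Y Z W = Rm S nab Z W X Y := by
  have hsplit := G.sum_eq W
  have l1 : Rm S nab X Y Z W = Rm S nab X Y Z (G.H W) + Rm S nab X Y Z (G.Vp W) := by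
    conv_lhs => rw [← hsplit]
    simp only [Rm]
    rw [aux_g_addr]
  have l2 : Rm S nab Z W X Y
      = Rm S nab Z (G.H W) X Y + Rm S nab Z (G.Vp W) X Y := by
    conv_lhs => rw [← hsplit]
    simp only [Rm]
    rw [aux_curv_addB S hcan.conn, S.g_addl]
  have m1 : Rm S nab X Y Z (G.Vp W) = 0 :=
    aux_Rm_HV_zero S hcan hz (aux_Vp_Vp S G W) X Y
  have m2 : Rm S nab Z (G.Vp W) X Y = 0 :=
    aux_Rm_vert2_zero S hcan hnormal hint hz hx hy (aux_Vp_Vp S G W)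
  have m3 : Rm S nab X Y Z (G.H W) = Rm S nab Z (G.H W) X Y :=
    aux_Rm_pair_horiz S hcan hnormal hint hx hy hz (G.H_H W)
  linear_combination l1 - l2 + m1 - m2 + m3

end AuxSRC

open VFCalc in
/-- If `VM` is normal and integrable then the curvature tensor
of the canonical connection has the pair symmetry `Rm(X,Y,Z,W) = Rm(Z,W,X,Y)`
whenever at least three of `X,Y,Z,W` are horizontal. -/
theorem pair_symmetry_three_horizontal
    {F : Type*} {V : Type*} [CommRing F] [Algebra ℝ F]
    [AddCommGroup V] [Module F V]
    (S : VFCalc F V) (G : TwoGrading S) (nab : V → V → V)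
    (hcan : IsCanonical S G nab)
    (hnormal : NormalV S G) (hint : IntegrableV S G) :
    ∀ X Y Z W : V,
      ((G.H X = X ∧ G.H Y = Y ∧ G.H Z = Z) ∨
       (G.H X = X ∧ G.H Y = Y ∧ G.H W = W) ∨
       (G.H X = X ∧ G.H Z = Z ∧ G.H W = W) ∨
       (G.H Y = Y ∧ G.H Z = Z ∧ G.H W = W)) →
      Rm S nab X Y Z W = Rm S nab Z W X Y := by
  intro X Y Z W hcase
  rcases hcase with ⟨hx, hy, hz⟩ | ⟨hx, hy, hw⟩ | ⟨hx, hz, hw⟩ | ⟨hy, hz, hw⟩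
  · exact aux_core S hcan hnormal hint W hx hy hz
  · have c := aux_core S hcan hnormal hint Z hx hy hw
    have a1 : Rm S nab X Y Z W = -Rm S nab X Y W Z :=
      aux_Rm_anti34 S hcan.metric _ _ _ _
    have a2 : Rm S nab Z W X Y = -Rm S nab W Z X Y :=
      aux_Rm_anti12 S hcan.conn _ _ _ _
    linear_combination a1 - a2 - c
  · exact (aux_core S hcan hnormal hint Y hz hw hx).symm
  · have c := aux_core S hcan hnormal hint X hz hw hy
    have a1 : Rm S nab Z W X Y = -Rm S nab Z W Y X :=
      aux_Rm_anti34 S hcan.metric _ _ _ _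
    have a2 : Rm S nab X Y Z W = -Rm S nab Y X Z W :=
      aux_Rm_anti12 S hcan.conn _ _ _ _
    linear_combination a2 - a1 + c
end

section
/- Let ∇ be the canonical connection on an sRC-manifold with VM normal. Then the subRiemannian Ricci curvature Rc(X,Y) = Σ_k Rm(X, E_k, E_k, Y) (sum over a horizontal orthonormal frame E_k) is symmetric on horizontal vectors: Rc(X,Y) = Rc(Y,X) for all X, Y ∈ HM. If moreover VM is integrable, then Rc(U,X) = 0 for all vertical U and horizontal X. -/
section Helpers

open VFCalc

namespace SRCProof

variable {F : Type*} {V : Type*} [CommRing F] [Algebra ℝ F]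
  [AddCommGroup V] [Module F V]

/-- Divide by two in an `ℝ`-algebra. -/
theorem half_cancel (x : F) (h : x + x = 0) : x = 0 := by
  have h1 : (algebraMap ℝ F (1/2 : ℝ)) * (x + x) = x := by
    rw [mul_add, ← add_mul, ← map_add]; norm_num
  rw [← h1, h, mul_zero]

theorem half_eq (x y : F) (h : x + x = y + y) : x = y := by
  have := half_cancel (x - y) (by linear_combination h)
  exact sub_eq_zero.mp this

section Basic

variable (S : VFCalc F V)

theorem g_zero_left (B : V) : S.g 0 B = 0 := by
  have := S.g_smull 0 0 B
  simpa using this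

theorem g_neg_left (A B : V) : S.g (-A) B = -S.g A B := by
  have h := S.g_addl A (-A) B
  rw [add_neg_cancel, g_zero_left] at h
  linear_combination -h

theorem g_sub_left (A B C : V) : S.g (A - B) C = S.g A C - S.g B C := by
  rw [sub_eq_add_neg, S.g_addl, g_neg_left]; ring

theorem g_neg_right (A B : V) : S.g A (-B) = -S.g A B := by
  rw [S.g_symm, g_neg_left, S.g_symm B]

theorem g_add_right (A B C : V) : S.g A (B + C) = S.g A B + S.g A C := by
  rw [S.g_symm, S.g_addl, S.g_symm B, S.g_symm C]

theorem g_sub_right (A B C : V) : S.g A (B - C) = S.g A B - S.g A C := by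
  rw [S.g_symm, g_sub_left, S.g_symm B, S.g_symm C]

theorem br_zero_left (B : V) : S.bracket 0 B = 0 := by
  have h := S.bracket_addl 0 0 B
  simpa using h.symm

theorem br_neg_left (A B : V) : S.bracket (-A) B = -S.bracket A B := by
  have h := S.bracket_addl A (-A) B
  rw [add_neg_cancel, br_zero_left] at h
  exact eq_neg_of_add_eq_zero_right h.symm

theorem br_sub_left (A B C : V) : S.bracket (A - B) C = S.bracket A C - S.bracket B C := by
  rw [sub_eq_add_neg, S.bracket_addl, br_neg_left, sub_eq_add_neg]

theorem br_add_right (A B C : V) : S.bracket A (B + C) = S.bracket A B + S.bracket A C := by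
  rw [S.bracket_antisymm, S.bracket_addl, S.bracket_antisymm B, S.bracket_antisymm C]
  abel

theorem br_neg_right (A B : V) : S.bracket A (-B) = -S.bracket A B := by
  rw [S.bracket_antisymm, br_neg_left, S.bracket_antisymm B]
  abel

theorem br_sub_right (A B C : V) : S.bracket A (B - C) = S.bracket A B - S.bracket A C := by
  rw [sub_eq_add_neg, br_add_right, br_neg_right, sub_eq_add_neg]

end Basic

section Conn

variable (S : VFCalc F V) (nab : V → V → V) (hc : IsConnection S nab)
include hc

theorem nab_zero_left (B : V) : nab 0 B = 0 := by
  have := hc.smulX 0 0 B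
  simpa using this

theorem nab_neg_left (A B : V) : nab (-A) B = -nab A B := by
  have h := hc.addX A (-A) B
  rw [add_neg_cancel, nab_zero_left S nab hc] at h
  exact eq_neg_of_add_eq_zero_right h.symm

theorem nab_sub_left (A B C : V) : nab (A - B) C = nab A C - nab B C := by
  rw [sub_eq_add_neg, hc.addX, nab_neg_left S nab hc, sub_eq_add_neg]

theorem nab_zero_right (A : V) : nab A 0 = 0 := by
  have h := hc.addY A 0 0
  rw [add_zero] at h
  exact add_eq_left.mp h.symm

theorem nab_neg_right (A B : V) : nab A (-B) = -nab A B := by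
  have h := hc.addY A B (-B)
  rw [add_neg_cancel, nab_zero_right S nab hc] at h
  exact eq_neg_of_add_eq_zero_right h.symm

theorem nab_sub_right (A B C : V) : nab A (B - C) = nab A B - nab A C := by
  rw [sub_eq_add_neg, hc.addY, nab_neg_right S nab hc, sub_eq_add_neg]

end Conn


section Grading

variable (S : VFCalc F V) (G : TwoGrading S)

theorem Vp_eq_sub (A : V) : G.Vp A = A - G.H A := by
  have := G.sum_eq A
  exact eq_sub_of_add_eq' this

theorem H_of_vert {A : V} (h : G.Vp A = A) : G.H A = 0 := by
  rw [← h]; exact G.H_Vp A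

theorem Vp_of_Hzero {A : V} (h : G.H A = 0) : G.Vp A = A := by
  rw [Vp_eq_sub, h, sub_zero]

theorem g_horiz_vert {A B : V} (hA : G.H A = A) (hB : G.H B = 0) :
    S.g A B = 0 := by
  have hv : G.Vp B = B := Vp_of_Hzero S G hB
  calc S.g A B = S.g (G.H A) (G.Vp B) := by rw [hA, hv]
    _ = 0 := G.orth A B

theorem g_vert_horiz {A B : V} (hA : G.H A = 0) (hB : G.H B = B) :
    S.g A B = 0 := by
  rw [S.g_symm]; exact g_horiz_vert S G hB hA

theorem H_neg (A : V) : G.H (-A) = -G.H A := by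
  have := G.H_smul (-1 : F) A
  simpa [neg_one_smul] using this

theorem H_sub (A B : V) : G.H (A - B) = G.H A - G.H B := by
  rw [sub_eq_add_neg, G.H_add, H_neg, sub_eq_add_neg]

end Grading

section Tor

variable (S : VFCalc F V) (nab : V → V → V)

theorem tor_antisym (A B : V) : tor S nab A B = -tor S nab B A := by
  simp only [VFCalc.tor]
  rw [S.bracket_antisymm A B]
  abel

end Tor

section Canonical

variable (S : VFCalc F V) (G : TwoGrading S) (nab : V → V → V)
  (hcan : IsCanonical S G nab)
include hcan

theorem nab_horiz {B : V} (A : V) (hB : G.H B = B) : G.H (nab A B) = nab A B := by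
  rw [← hcan.parH, hB]

theorem nab_vert {B : V} (A : V) (hB : G.H B = 0) : G.H (nab A B) = 0 := by
  rw [← hcan.parH, hB, nab_zero_right S nab hcan.conn]

theorem curv_vert {C : V} (A B : V) (hC : G.H C = 0) :
    G.H (curv S nab A B C) = 0 := by
  simp only [VFCalc.curv]
  rw [H_sub, H_sub, nab_vert S G nab hcan _ (nab_vert S G nab hcan _ hC),
    nab_vert S G nab hcan _ (nab_vert S G nab hcan _ hC),
    nab_vert S G nab hcan _ hC]
  abel

theorem Rm_add34 (A B C D : V) :
    Rm S nab A B C D + Rm S nab A B D C = 0 := by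
  have hm := hcan.metric
  have hb := S.D_bracket A B (S.g C D)
  have e1 : S.D A (S.D B (S.g C D)) =
      S.g (nab A (nab B C)) D + S.g (nab B C) (nab A D)
        + (S.g (nab A C) (nab B D) + S.g C (nab A (nab B D))) := by
    rw [hm B C D, S.D_add, hm A (nab B C) D, hm A C (nab B D)]
  have e2 : S.D B (S.D A (S.g C D)) =
      S.g (nab B (nab A C)) D + S.g (nab A C) (nab B D)
        + (S.g (nab B C) (nab A D) + S.g C (nab B (nab A D))) := by
    rw [hm A C D, S.D_add, hm B (nab A C) D, hm B C (nab A D)]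
  have e3 := hm (S.bracket A B) C D
  show S.g (curv S nab A B C) D + S.g (curv S nab A B D) C = 0
  rw [S.g_symm (curv S nab A B D) C]
  simp only [VFCalc.curv, g_sub_left, g_sub_right]
  linear_combination -e1 + e2 + e3 - hb

theorem curv_swap12 (A B C : V) : curv S nab B A C = -curv S nab A B C := by
  simp only [VFCalc.curv]
  rw [S.bracket_antisymm B A, nab_neg_left S nab hcan.conn]
  abel

theorem Rm_add12 (A B C D : V) :
    Rm S nab A B C D + Rm S nab B A C D = 0 := by
  simp only [VFCalc.Rm]
  rw [curv_swap12 S G nab hcan A B C, g_neg_left]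
  ring

theorem Rm_pair_swap (A B C D : V) :
    Rm S nab A B C D = Rm S nab B A D C := by
  have h1 := Rm_add12 S G nab hcan A B C D
  have h2 := Rm_add34 S G nab hcan B A C D
  linear_combination h1 - h2

end Canonical


section Bianchi

variable (S : VFCalc F V) (nab : V → V → V) (hc : IsConnection S nab)
include hc

theorem bianchi_vec (X Y Z : V) :
    curv S nab X Y Z + curv S nab Y Z X + curv S nab Z X Y =
      (tor S nab (tor S nab X Y) Z + tor S nab (tor S nab Y Z) X
        + tor S nab (tor S nab Z X) Y)
      + (nabTor S nab X Y Z + nabTor S nab Y Z X + nabTor S nab Z X Y) := by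
  have hj : S.bracket Z (S.bracket X Y) =
      -(S.bracket X (S.bracket Y Z) + S.bracket Y (S.bracket Z X)) :=
    eq_neg_of_add_eq_zero_right (S.jacobi X Y Z)
  simp only [VFCalc.curv, VFCalc.tor, VFCalc.nabTor,
    nab_sub_left S nab hc, nab_sub_right S nab hc,
    br_sub_left S, br_sub_right S]
  rw [S.bracket_antisymm Y (nab X Z), S.bracket_antisymm Z (nab Y X),
    S.bracket_antisymm X (nab Z Y),
    S.bracket_antisymm (S.bracket X Y) Z, S.bracket_antisymm (S.bracket Y Z) X,
    S.bracket_antisymm (S.bracket Z X) Y, hj]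
  abel

end Bianchi


section Frame

variable (S : VFCalc F V) (G : TwoGrading S) {d : ℕ} (E : Fin d → V)
  (hE : IsHFrame S G E)
include hE

theorem Hproj (W : V) : G.H W = ∑ i, S.g W (E i) • E i := by
  have h1 := hE.2.2 (G.H W) (G.H_H W)
  have h2 : ∀ i, S.g (G.H W) (E i) = S.g W (E i) := by
    intro i
    have hv : S.g (G.Vp W) (E i) = 0 := by
      rw [S.g_symm]
      have := G.orth (E i) W
      rwa [hE.1 i] at this
    have hsum := S.g_addl (G.H W) (G.Vp W) (E i)
    rw [G.sum_eq] at hsum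
    linear_combination -hsum - hv
  exact h1.trans (Finset.sum_congr rfl (fun i _ => by rw [h2 i]))

theorem horiz_of_pairing_zero {W : V} (h : ∀ i, S.g W (E i) = 0) :
    G.H W = 0 := by
  rw [Hproj S G E hE W]
  exact Finset.sum_eq_zero fun i _ => by rw [h i, zero_smul]

end Frame

section Normality

variable (S : VFCalc F V) (G : TwoGrading S) (nab : V → V → V)
  (hcan : IsCanonical S G nab) (hnormal : NormalV S G)
include hcan hnormal

/-- Normality kills the horizontal part of `Tor(X,T)` for `X` horizontal,
`T` vertical. -/
theorem tor_HV_pairing {A T B : V} (hA : G.H A = A) (hT : G.H T = 0)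
    (hB : G.H B = B) : S.g (tor S nab A T) B = 0 := by
  have hc := hcan.conn
  have hVpT : G.Vp T = T := Vp_of_Hzero S G hT
  have hn := hnormal A B T hA hB hVpT
  have hm := hcan.metric
  -- expand D T (g A B)
  have e1 := hm T A B
  have ta : nab T A = tor S nab T A + nab A T + S.bracket T A := by
    simp only [VFCalc.tor]; abel
  have tb : nab T B = tor S nab T B + nab B T + S.bracket T B := by
    simp only [VFCalc.tor]; abel
  have vA : S.g (nab A T) B = 0 :=
    g_vert_horiz S G (nab_vert S G nab hcan A hT) hB
  have vB : S.g A (nab B T) = 0 := by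
    rw [S.g_symm]
    exact g_vert_horiz S G (nab_vert S G nab hcan B hT) hA
  rw [ta, tb] at e1
  rw [S.g_addl, S.g_addl, g_add_right, g_add_right, vA, vB] at e1
  -- e1 : D T (g A B) = g (tor T A) B + 0 + g (br T A) B + (g A (tor T B) + 0 + g A (br T B))
  -- normalize bracket orientations in hn
  rw [S.bracket_antisymm A T, S.bracket_antisymm B T, g_neg_left, g_neg_left,
    S.g_symm (S.bracket T B) A] at hn
  -- antisymmetry relation
  have anti : S.g (tor S nab T A) B + S.g A (tor S nab T B) = 0 := by
    linear_combination hn - e1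
  -- torsion symmetry from canonicity
  have hsym := hcan.torSymH A B T
  rw [hA, hB, hVpT] at hsym
  -- hsym : g (tor A T) B = g (tor B T) A
  have hTA : tor S nab T A = -tor S nab A T := tor_antisym S nab T A
  have hTB : tor S nab T B = -tor S nab B T := tor_antisym S nab T B
  rw [hTA, hTB, g_neg_left, g_neg_right] at anti
  have anti2 : S.g (tor S nab A T) B + S.g (tor S nab A T) B = 0 := by
    rw [S.g_symm A (tor S nab B T), ← hsym] at anti
    linear_combination -anti
  exact half_cancel _ anti2

end Normality


section TorVert

variable (S : VFCalc F V) (G : TwoGrading S) (nab : V → V → V)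
  (hcan : IsCanonical S G nab)
include hcan

theorem tor_vert_HH {A B : V} (hA : G.H A = A) (hB : G.H B = B) :
    G.H (tor S nab A B) = 0 := by
  have := hcan.torHH A B
  rwa [hA, hB] at this

theorem nabTor_vert {A B C : V} (h1 : G.H (tor S nab B C) = 0)
    (h2 : G.H (tor S nab (nab A B) C) = 0)
    (h3 : G.H (tor S nab B (nab A C)) = 0) :
    G.H (nabTor S nab A B C) = 0 := by
  simp only [VFCalc.nabTor]
  rw [H_sub, H_sub, nab_vert S G nab hcan A h1, h2, h3]
  simp

theorem tor_vert_VV (hint : IntegrableV S G) {A B : V} (hA : G.H A = 0)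
    (hB : G.H B = 0) : G.H (tor S nab A B) = 0 := by
  simp only [VFCalc.tor]
  have hbr := hint A B
  rw [Vp_of_Hzero S G hA, Vp_of_Hzero S G hB] at hbr
  rw [H_sub, H_sub, nab_vert S G nab hcan A hB, nab_vert S G nab hcan B hA, hbr]
  simp

variable (hnormal : NormalV S G) {dd : ℕ} (E : Fin dd → V) (hE : IsHFrame S G E)
include hnormal hE

theorem tor_vert_HV {A B : V} (hA : G.H A = A) (hB : G.H B = 0) :
    G.H (tor S nab A B) = 0 :=
  horiz_of_pairing_zero S G E hE fun i =>
    tor_HV_pairing S G nab hcan hnormal hA hB (hE.1 i)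

theorem tor_vert_VH {A B : V} (hA : G.H A = 0) (hB : G.H B = B) :
    G.H (tor S nab A B) = 0 := by
  rw [tor_antisym, H_neg, tor_vert_HV S G nab hcan hnormal E hE hB hA, neg_zero]

end TorVert

section Pairing

variable (S : VFCalc F V) (G : TwoGrading S) (nab : V → V → V)

theorem bianchi_pair (hc : IsConnection S nab) {X Y Z W : V} (hW : G.H W = W)
    (h1 : G.H (tor S nab (tor S nab X Y) Z) = 0)
    (h2 : G.H (tor S nab (tor S nab Y Z) X) = 0)
    (h3 : G.H (tor S nab (tor S nab Z X) Y) = 0)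
    (h4 : G.H (nabTor S nab X Y Z) = 0)
    (h5 : G.H (nabTor S nab Y Z X) = 0)
    (h6 : G.H (nabTor S nab Z X Y) = 0) :
    Rm S nab X Y Z W + Rm S nab Y Z X W + Rm S nab Z X Y W = 0 := by
  have hb := bianchi_vec S nab hc X Y Z
  have h := congrArg (fun v => S.g v W) hb
  simp only [S.g_addl] at h
  rw [g_vert_horiz S G h1 hW, g_vert_horiz S G h2 hW, g_vert_horiz S G h3 hW,
    g_vert_horiz S G h4 hW, g_vert_horiz S G h5 hW, g_vert_horiz S G h6 hW] at h
  simpa [VFCalc.Rm] using h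

variable (hcan : IsCanonical S G nab) (hnormal : NormalV S G)
  {d : ℕ} (E : Fin d → V) (hE : IsHFrame S G E)
include hcan hnormal hE

theorem pair_symm {X Y Z W : V} (hX : G.H X = X) (hY : G.H Y = Y)
    (hZ : G.H Z = Z) (hW : G.H W = W) :
    Rm S nab X Y Z W = Rm S nab Z W X Y := by
  have bih : ∀ A B C D, G.H A = A → G.H B = B → G.H C = C → G.H D = D →
      Rm S nab A B C D + Rm S nab B C A D + Rm S nab C A B D = 0 := by
    intro A B C D hA hB hC hD
    refine bianchi_pair S G nab hcan.conn hD ?_ ?_ ?_ ?_ ?_ ?_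
    · exact tor_vert_VH S G nab hcan hnormal E hE
        (tor_vert_HH S G nab hcan hA hB) hC
    · exact tor_vert_VH S G nab hcan hnormal E hE
        (tor_vert_HH S G nab hcan hB hC) hA
    · exact tor_vert_VH S G nab hcan hnormal E hE
        (tor_vert_HH S G nab hcan hC hA) hB
    · exact nabTor_vert S G nab hcan (tor_vert_HH S G nab hcan hB hC)
        (tor_vert_HH S G nab hcan (nab_horiz S G nab hcan A hB) hC)
        (tor_vert_HH S G nab hcan hB (nab_horiz S G nab hcan A hC))
    · exact nabTor_vert S G nab hcan (tor_vert_HH S G nab hcan hC hA)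
        (tor_vert_HH S G nab hcan (nab_horiz S G nab hcan B hC) hA)
        (tor_vert_HH S G nab hcan hC (nab_horiz S G nab hcan B hA))
    · exact nabTor_vert S G nab hcan (tor_vert_HH S G nab hcan hA hB)
        (tor_vert_HH S G nab hcan (nab_horiz S G nab hcan C hA) hB)
        (tor_vert_HH S G nab hcan hA (nab_horiz S G nab hcan C hB))
  have b1 := bih Y Z X W hY hZ hX hW
  have b2 := bih Z X W Y hZ hX hW hY
  have b3 := bih X W Y Z hX hW hY hZ
  have b4 := bih W Y Z X hW hY hZ hX
  have e1 := Rm_add34 S G nab hcan Y Z X W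
  have e2 := Rm_add34 S G nab hcan Z X Y W
  have e3 := Rm_add34 S G nab hcan X W Z Y
  have e4 := Rm_add34 S G nab hcan W Y X Z
  have e5 := Rm_pair_swap S G nab hcan Y X W Z
  have e6 := Rm_add12 S G nab hcan W Z X Y
  have e7 := Rm_add34 S G nab hcan Z W Y X
  refine half_eq _ _ ?_
  linear_combination b1 + b2 + b3 + b4 - e1 - e2 - e3 - e4 - e5 - e6 - e7

end Pairing

end SRCProof

end Helpers

open VFCalc in
/-- If `VM` is normal, the subRiemannian Ricci curvature is
symmetric on horizontal vectors; if moreover `VM` is integrable then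
`Rc(U,X) = 0` for vertical `U` and horizontal `X`. -/
theorem ricci_symmetric_and_mixed_vanishing
    {F : Type*} {V : Type*} [CommRing F] [Algebra ℝ F]
    [AddCommGroup V] [Module F V]
    (S : VFCalc F V) (G : TwoGrading S) (nab : V → V → V)
    (hcan : IsCanonical S G nab) (hnormal : NormalV S G)
    {d : ℕ} (E : Fin d → V) (hE : IsHFrame S G E) :
    (∀ X Y, G.H X = X → G.H Y = Y → Ric S nab E X Y = Ric S nab E Y X) ∧
    (IntegrableV S G →
      ∀ U X, G.Vp U = U → G.H X = X → Ric S nab E U X = 0) := by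
  open SRCProof in
  constructor
  · intro X Y hX hY
    simp only [VFCalc.Ric]
    refine Finset.sum_congr rfl fun k _ => ?_
    have hK := hE.1 k
    have p := pair_symm S G nab hcan hnormal E hE hX hK hK hY
    have a12 := Rm_add12 S G nab hcan (E k) Y X (E k)
    have a34 := Rm_add34 S G nab hcan Y (E k) X (E k)
    linear_combination p + a12 - a34
  · intro hint U X hU hX
    have hU0 : G.H U = 0 := H_of_vert S G hU
    simp only [VFCalc.Ric]
    refine Finset.sum_eq_zero fun k _ => ?_
    have hK := hE.1 k
    have hb : Rm S nab U (E k) X (E k) + Rm S nab (E k) X U (E k)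
        + Rm S nab X U (E k) (E k) = 0 := by
      refine bianchi_pair S G nab hcan.conn hK ?_ ?_ ?_ ?_ ?_ ?_
      · exact tor_vert_VH S G nab hcan hnormal E hE
          (tor_vert_VH S G nab hcan hnormal E hE hU0 hK) hX
      · exact tor_vert_VV S G nab hcan hint
          (tor_vert_HH S G nab hcan hK hX) hU0
      · exact tor_vert_VH S G nab hcan hnormal E hE
          (tor_vert_HV S G nab hcan hnormal E hE hX hU0) hK
      · exact nabTor_vert S G nab hcan (tor_vert_HH S G nab hcan hK hX)
          (tor_vert_HH S G nab hcan (nab_horiz S G nab hcan U hK) hX)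
          (tor_vert_HH S G nab hcan hK (nab_horiz S G nab hcan U hX))
      · exact nabTor_vert S G nab hcan
          (tor_vert_HV S G nab hcan hnormal E hE hX hU0)
          (tor_vert_HV S G nab hcan hnormal E hE
            (nab_horiz S G nab hcan (E k) hX) hU0)
          (tor_vert_HV S G nab hcan hnormal E hE hX
            (nab_vert S G nab hcan (E k) hU0))
      · exact nabTor_vert S G nab hcan
          (tor_vert_VH S G nab hcan hnormal E hE hU0 hK)
          (tor_vert_VH S G nab hcan hnormal E hE
            (nab_vert S G nab hcan X hU0) hK)
          (tor_vert_VH S G nab hcan hnormal E hE hU0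
            (nab_horiz S G nab hcan X hK))
    have z1 : Rm S nab (E k) X U (E k) = 0 :=
      g_vert_horiz S G (curv_vert S G nab hcan (E k) X hU0) hK
    have z2 : Rm S nab X U (E k) (E k) = 0 :=
      half_cancel _ (Rm_add34 S G nab hcan X U (E k) (E k))
    have a34 := Rm_add34 S G nab hcan U (E k) X (E k)
    linear_combination a34 - hb + z1 + z2
end

section
/- (Contracted Bianchi identity) Let M be an sRC-manifold with VM normal and integrable, with canonical connection ∇, subRiemannian Ricci tensor Rc and horizontal scalar curvature S₀ = Σ_i Rc(E_i, E_i). Then for every horizontal vector field X, ∇_X S₀ = 2 Σ_j (∇ Rc)(E_j, X, E_j), where E_j is a horizontal orthonormal frame and (∇Rc)(A,B,C) = (∇_C Rc)(A,B). -/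
namespace VFCalc

variable {F : Type*} {V : Type*} [CommRing F] [Algebra ℝ F]
  [AddCommGroup V] [Module F V]

/-- The covariant derivative of the subRiemannian Ricci tensor:
`nabRic S nab E A B C = (∇_C Rc)(A,B)`. -/
def nabRic (S : VFCalc F V) (nab : V → V → V) {d : ℕ} (E : Fin d → V)
    (A B C : V) : F :=
  S.D C (Ric S nab E A B) - Ric S nab E (nab C A) B - Ric S nab E A (nab C B)

end VFCalc


section CBI

open VFCalc Finset

variable {F : Type*} {V : Type*} [CommRing F] [Algebra ℝ F]
  [AddCommGroup V] [Module F V]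

/-- In an `ℝ`-algebra, `a + a = 0` implies `a = 0`. -/
lemma CBI.half_cancel (a : F) (h : a + a = 0) : a = 0 := by
  have h2 : ((2:ℝ) • a) = 0 := by rw [two_smul]; exact h
  have : a = ((1/2 : ℝ)) • ((2:ℝ) • a) := by
    rw [smul_smul]; norm_num
  rw [this, h2, smul_zero]

namespace VFCalc

variable (S : VFCalc F V)

lemma D_zero (X : V) : S.D X 0 = 0 := by
  have := S.D_add X 0 0
  simpa using this.symm

lemma D_one (X : V) : S.D X 1 = 0 := by
  have := S.D_mul X 1 1
  simp only [one_mul, mul_one] at this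
  linear_combination -this

lemma D_neg (X : V) (f : F) : S.D X (-f) = - S.D X f := by
  have h := S.D_add X f (-f)
  rw [add_neg_cancel, S.D_zero] at h
  linear_combination -h

lemma D_sub (X : V) (f h : F) : S.D X (f - h) = S.D X f - S.D X h := by
  rw [sub_eq_add_neg, S.D_add, S.D_neg, sub_eq_add_neg]

lemma D_sum (X : V) {ι : Type*} (s : Finset ι) (f : ι → F) :
    S.D X (∑ i ∈ s, f i) = ∑ i ∈ s, S.D X (f i) :=
  map_sum (AddMonoidHom.mk' (S.D X) (S.D_add X)) f s

lemma g_addr (X Y Z : V) : S.g X (Y + Z) = S.g X Y + S.g X Z := by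
  rw [S.g_symm, S.g_addl, S.g_symm Y X, S.g_symm Z X]

lemma g_smulr (f : F) (X Y : V) : S.g X (f • Y) = f * S.g X Y := by
  rw [S.g_symm, S.g_smull, S.g_symm]

lemma g_zerol (Y : V) : S.g 0 Y = 0 := by
  have := S.g_addl 0 0 Y
  simpa using this.symm

lemma g_zeror (X : V) : S.g X 0 = 0 := by rw [S.g_symm, S.g_zerol]

lemma g_negl (X Y : V) : S.g (-X) Y = - S.g X Y := by
  have h := S.g_addl X (-X) Y
  rw [add_neg_cancel, S.g_zerol] at h
  linear_combination -h

lemma g_negr (X Y : V) : S.g X (-Y) = - S.g X Y := by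
  rw [S.g_symm, S.g_negl, S.g_symm]

lemma g_subl (X Y Z : V) : S.g (X - Y) Z = S.g X Z - S.g Y Z := by
  rw [sub_eq_add_neg, S.g_addl, S.g_negl, sub_eq_add_neg]

lemma g_subr (X Y Z : V) : S.g X (Y - Z) = S.g X Y - S.g X Z := by
  rw [S.g_symm, S.g_subl, S.g_symm Y X, S.g_symm Z X]

lemma g_suml {ι : Type*} (s : Finset ι) (v : ι → V) (Y : V) :
    S.g (∑ i ∈ s, v i) Y = ∑ i ∈ s, S.g (v i) Y :=
  map_sum (AddMonoidHom.mk' (fun X => S.g X Y) (fun a b => S.g_addl a b Y)) v s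

lemma bracket_zerol (Y : V) : S.bracket 0 Y = 0 := by
  have := S.bracket_addl 0 0 Y
  simpa using this.symm

lemma bracket_negl (X Y : V) : S.bracket (-X) Y = - S.bracket X Y := by
  have h := S.bracket_addl X (-X) Y
  rw [add_neg_cancel, S.bracket_zerol] at h
  exact eq_neg_of_add_eq_zero_right h.symm

lemma bracket_subl (X Y Z : V) : S.bracket (X - Y) Z = S.bracket X Z - S.bracket Y Z := by
  rw [sub_eq_add_neg, S.bracket_addl, S.bracket_negl, sub_eq_add_neg]


section Conn

set_option linter.unusedSectionVars false

variable {S : VFCalc F V} {nab : V → V → V} (hc : IsConnection S nab)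
include hc

lemma nab_zero2 (X : V) : nab X 0 = 0 := by
  have := hc.addY X 0 0
  simpa using this.symm

lemma nab_neg2 (X Y : V) : nab X (-Y) = - nab X Y := by
  have h := hc.addY X Y (-Y)
  rw [add_neg_cancel, nab_zero2 hc] at h
  exact eq_neg_of_add_eq_zero_right h.symm

lemma nab_sub2 (X Y Z : V) : nab X (Y - Z) = nab X Y - nab X Z := by
  rw [sub_eq_add_neg, hc.addY, nab_neg2 hc, sub_eq_add_neg]

lemma nab_zero1 (X : V) : nab 0 X = 0 := by
  have := hc.addX 0 0 X
  simpa using this.symm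

lemma nab_neg1 (X Y : V) : nab (-X) Y = - nab X Y := by
  have h := hc.addX X (-X) Y
  rw [add_neg_cancel, nab_zero1 hc] at h
  exact eq_neg_of_add_eq_zero_right h.symm

lemma nab_sub1 (X Y Z : V) : nab (X - Y) Z = nab X Z - nab Y Z := by
  rw [sub_eq_add_neg, hc.addX, nab_neg1 hc, sub_eq_add_neg]

/-- Antisymmetry of the curvature operator in its first two slots. -/
lemma curv_antisymm (X Y Z : V) : curv S nab X Y Z = - curv S nab Y X Z := by
  unfold curv
  rw [S.bracket_antisymm, nab_neg1 hc]
  abel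

lemma curv_add1 (A B Y Z : V) :
    curv S nab (A + B) Y Z = curv S nab A Y Z + curv S nab B Y Z := by
  unfold curv
  rw [hc.addX, S.bracket_addl, hc.addX, hc.addY,
    hc.addX (S.bracket A Y) (S.bracket B Y) Z]
  abel

lemma curv_add3 (X Y A B : V) :
    curv S nab X Y (A + B) = curv S nab X Y A + curv S nab X Y B := by
  unfold curv
  rw [hc.addY, hc.addY, hc.addY, hc.addY, hc.addY]
  abel

lemma curv_add2 (X A B Z : V) :
    curv S nab X (A + B) Z = curv S nab X A Z + curv S nab X B Z := by
  rw [curv_antisymm hc, curv_add1 hc, curv_antisymm hc A X Z, curv_antisymm hc B X Z]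
  abel

lemma curv_smul1 (f : F) (X Y Z : V) :
    curv S nab (f • X) Y Z = f • curv S nab X Y Z := by
  unfold curv
  have hb : S.bracket (f • X) Y = f • S.bracket X Y - (S.D Y f) • X := by
    rw [S.bracket_antisymm, S.bracket_leibniz, S.bracket_antisymm Y X, smul_neg]
    abel
  rw [hc.smulX, hc.smulX, hc.leibniz, hb, nab_sub1 hc, hc.smulX, hc.smulX]
  module

lemma curv_smul2 (f : F) (X Y Z : V) :
    curv S nab X (f • Y) Z = f • curv S nab X Y Z := by
  rw [curv_antisymm hc, curv_smul1 hc, curv_antisymm hc Y X Z, smul_neg, neg_neg]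

lemma curv_smul3 (f : F) (X Y Z : V) :
    curv S nab X Y (f • Z) = f • curv S nab X Y Z := by
  unfold curv
  rw [hc.leibniz Y f Z, hc.leibniz X f Z, hc.leibniz (S.bracket X Y) f Z,
    hc.addY, hc.leibniz, hc.leibniz, hc.addY, hc.leibniz, hc.leibniz,
    S.D_bracket]
  module

lemma Rm_antisymm12 (A B C D : V) : Rm S nab A B C D = - Rm S nab B A C D := by
  unfold Rm
  rw [curv_antisymm hc, S.g_negl]

lemma Rm_add1 (A B Y Z W : V) :
    Rm S nab (A + B) Y Z W = Rm S nab A Y Z W + Rm S nab B Y Z W := by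
  unfold Rm; rw [curv_add1 hc, S.g_addl]

lemma Rm_add2 (X A B Z W : V) :
    Rm S nab X (A + B) Z W = Rm S nab X A Z W + Rm S nab X B Z W := by
  unfold Rm; rw [curv_add2 hc, S.g_addl]

lemma Rm_add3 (X Y A B W : V) :
    Rm S nab X Y (A + B) W = Rm S nab X Y A W + Rm S nab X Y B W := by
  unfold Rm; rw [curv_add3 hc, S.g_addl]

lemma Rm_add4 (X Y Z A B : V) :
    Rm S nab X Y Z (A + B) = Rm S nab X Y Z A + Rm S nab X Y Z B := by
  unfold Rm; rw [S.g_addr]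

lemma Rm_smul1 (f : F) (X Y Z W : V) :
    Rm S nab (f • X) Y Z W = f * Rm S nab X Y Z W := by
  unfold Rm; rw [curv_smul1 hc, S.g_smull]

lemma Rm_smul2 (f : F) (X Y Z W : V) :
    Rm S nab X (f • Y) Z W = f * Rm S nab X Y Z W := by
  unfold Rm; rw [curv_smul2 hc, S.g_smull]

lemma Rm_smul3 (f : F) (X Y Z W : V) :
    Rm S nab X Y (f • Z) W = f * Rm S nab X Y Z W := by
  unfold Rm; rw [curv_smul3 hc, S.g_smull]

lemma Rm_smul4 (f : F) (X Y Z W : V) :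
    Rm S nab X Y Z (f • W) = f * Rm S nab X Y Z W := by
  unfold Rm; rw [S.g_smulr]

end Conn

/-- Antisymmetry of `Rm` in the last two slots, from metric compatibility. -/
lemma Rm_antisymm34 {S : VFCalc F V} {nab : V → V → V}
    (hm : MetricCompat S nab) (X Y Z W : V) :
    Rm S nab X Y Z W = - Rm S nab X Y W Z := by
  have h1 : S.D X (S.D Y (S.g Z W))
      = S.g (nab X (nab Y Z)) W + S.g (nab Y Z) (nab X W)
        + (S.g (nab X Z) (nab Y W) + S.g Z (nab X (nab Y W))) := by
    rw [hm Y Z W, S.D_add, hm X (nab Y Z) W]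
    have h1b : S.D X (S.g Z (nab Y W))
        = S.g (nab X Z) (nab Y W) + S.g Z (nab X (nab Y W)) := hm X Z (nab Y W)
    rw [h1b]
  have h2 : S.D Y (S.D X (S.g Z W))
      = S.g (nab Y (nab X Z)) W + S.g (nab X Z) (nab Y W)
        + (S.g (nab Y Z) (nab X W) + S.g Z (nab Y (nab X W))) := by
    rw [hm X Z W, S.D_add, hm Y (nab X Z) W]
    have h2b : S.D Y (S.g Z (nab X W))
        = S.g (nab Y Z) (nab X W) + S.g Z (nab Y (nab X W)) := hm Y Z (nab X W)
    rw [h2b]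
  have h3 : S.D (S.bracket X Y) (S.g Z W)
      = S.g (nab (S.bracket X Y) Z) W + S.g Z (nab (S.bracket X Y) W) :=
    hm (S.bracket X Y) Z W
  have h4 : S.D (S.bracket X Y) (S.g Z W)
      = S.D X (S.D Y (S.g Z W)) - S.D Y (S.D X (S.g Z W)) := S.D_bracket X Y (S.g Z W)
  have hgs1 := S.g_symm Z (nab X (nab Y W))
  have hgs2 := S.g_symm Z (nab Y (nab X W))
  have hgs3 := S.g_symm Z (nab (S.bracket X Y) W)
  unfold Rm curv
  rw [S.g_subl, S.g_subl, S.g_subl, S.g_subl]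
  linear_combination -h1 + h2 + h3 - h4 - hgs1 + hgs2 + hgs3


section Grading

set_option linter.unusedSectionVars false

variable {S : VFCalc F V} (G : TwoGrading S)

lemma H_zero' : G.H (0 : V) = 0 := by
  have := G.H_smul 0 0
  simpa using this

lemma H_neg' (X : V) : G.H (-X) = - G.H X := by
  have h := G.H_add X (-X)
  rw [add_neg_cancel, H_zero'] at h
  exact eq_neg_of_add_eq_zero_right h.symm

lemma H_sub' (X Y : V) : G.H (X - Y) = G.H X - G.H Y := by
  rw [sub_eq_add_neg, G.H_add, H_neg', sub_eq_add_neg]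

lemma H_sum' {ι : Type*} (s : Finset ι) (v : ι → V) :
    G.H (∑ i ∈ s, v i) = ∑ i ∈ s, G.H (v i) :=
  map_sum (AddMonoidHom.mk' G.H G.H_add) v s

/-- If `A` is vertical (`H A = 0`) and `B` is horizontal then `⟨A,B⟩ = 0`. -/
lemma g_vert_horiz {A B : V} (hA : G.H A = 0) (hB : G.H B = B) : S.g A B = 0 := by
  have hA' : G.Vp A = A := by
    have := G.sum_eq A; rw [hA, zero_add] at this; exact this
  rw [S.g_symm, ← hB, ← hA', G.orth]

lemma g_horiz_vert {A B : V} (hA : G.H A = A) (hB : G.H B = 0) : S.g A B = 0 := by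
  rw [S.g_symm]; exact g_vert_horiz G hB hA

end Grading

section Canonical

set_option linter.unusedSectionVars false

variable {S : VFCalc F V} {G : TwoGrading S} {nab : V → V → V}
  (hcan : IsCanonical S G nab)
include hcan

lemma nab_horiz {Y : V} (X : V) (hY : G.H Y = Y) : G.H (nab X Y) = nab X Y := by
  have h := hcan.parH X Y
  rw [hY] at h
  exact h.symm

lemma nab_vert {Y : V} (X : V) (hY : G.H Y = 0) : G.H (nab X Y) = 0 := by
  rw [← hcan.parH, hY, nab_zero2 hcan.conn]

/-- Torsion of two horizontal fields is vertical. -/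
lemma tor_hh {X Y : V} (hX : G.H X = X) (hY : G.H Y = Y) :
    G.H (tor S nab X Y) = 0 := by
  have := hcan.torHH X Y
  rwa [hX, hY] at this

/-- Under normality, torsion of a horizontal and a vertical field is vertical. -/
lemma tor_hv (hnormal : NormalV S G) {d : ℕ} {E : Fin d → V} (hE : IsHFrame S G E)
    {X T : V} (hX : G.H X = X) (hT : G.H T = 0) :
    G.H (tor S nab X T) = 0 := by
  have hT' : G.Vp T = T := by
    have := G.sum_eq T; rw [hT, zero_add] at this; exact this
  -- ⟨tor(X,T), Z⟩ = 0 for every horizontal Z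
  have key : ∀ Z : V, G.H Z = Z → S.g (tor S nab X T) Z = 0 := by
    intro Z hZ
    have hnor := hnormal X Z T hX hZ hT'
    have hmet := hcan.metric T X Z
    have hsym : S.g (tor S nab X T) Z = S.g (tor S nab Z T) X := by
      have := hcan.torSymH X Z T
      rwa [hX, hZ, hT'] at this
    have e1 : S.g (nab X T) Z = 0 :=
      g_vert_horiz G (nab_vert hcan X hT) hZ
    have e2 : S.g (nab Z T) X = 0 :=
      g_vert_horiz G (nab_vert hcan Z hT) hX
    -- expand the two torsion pairings
    have f1 : S.g (tor S nab X T) Z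
        = S.g (nab X T) Z - S.g (nab T X) Z - S.g (S.bracket X T) Z := by
      unfold tor; rw [S.g_subl, S.g_subl]
    have f2 : S.g (tor S nab Z T) X
        = S.g (nab Z T) X - S.g (nab T Z) X - S.g (S.bracket Z T) X := by
      unfold tor; rw [S.g_subl, S.g_subl]
    have hg1 := S.g_symm (nab T X) Z
    have hg2 := S.g_symm (nab T Z) X
    have hg3 := S.g_symm X Z
    have hsum : S.g (tor S nab X T) Z + S.g (tor S nab X T) Z = 0 := by
      nth_rewrite 2 [hsym]
      rw [f1, f2, e1, e2]
      linear_combination -hnor + hmet - hg2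
    exact CBI.half_cancel _ hsum
  -- conclude using the horizontal frame
  have hsp := hE.2.2 (G.H (tor S nab X T)) (G.H_H _)
  rw [hsp]
  have hco : ∀ i, S.g (G.H (tor S nab X T)) (E i) = 0 := by
    intro i
    have h2' : S.g (G.Vp (tor S nab X T)) (E i) = 0 :=
      g_vert_horiz G (G.H_Vp _) (hE.1 i)
    have h1 : S.g (tor S nab X T) (E i)
        = S.g (G.H (tor S nab X T)) (E i) + S.g (G.Vp (tor S nab X T)) (E i) := by
      conv_lhs => rw [← G.sum_eq (tor S nab X T)]
      rw [S.g_addl]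
    linear_combination -h1 + key (E i) (hE.1 i) - h2'
  exact Finset.sum_eq_zero (fun i _ => by rw [hco i, zero_smul])

/-- Under integrability, torsion of two vertical fields is vertical. -/
lemma tor_vv (hint : IntegrableV S G) {T U : V} (hT : G.H T = 0) (hU : G.H U = 0) :
    G.H (tor S nab T U) = 0 := by
  have hT' : G.Vp T = T := by
    have := G.sum_eq T; rw [hT, zero_add] at this; exact this
  have hU' : G.Vp U = U := by
    have := G.sum_eq U; rw [hU, zero_add] at this; exact this
  have hb : G.H (S.bracket T U) = 0 := by
    have := hint T U; rwa [hT', hU'] at this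
  unfold tor
  rw [H_sub', H_sub', nab_vert hcan T hU, nab_vert hcan U hT, hb]
  abel

/-- Under normality and integrability, all torsion is vertical. -/
lemma tor_vert (hnormal : NormalV S G) (hint : IntegrableV S G)
    {d : ℕ} {E : Fin d → V} (hE : IsHFrame S G E) (A B : V) :
    G.H (tor S nab A B) = 0 := by
  have hdecA := G.sum_eq A
  have hdecB := G.sum_eq B
  have tor_anti : ∀ P Q : V, tor S nab P Q = - tor S nab Q P := by
    intro P Q; unfold tor; rw [S.bracket_antisymm]; abel
  have hHH : G.H (tor S nab (G.H A) (G.H B)) = 0 := tor_hh hcan (G.H_H A) (G.H_H B)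
  have hHV : G.H (tor S nab (G.H A) (G.Vp B)) = 0 :=
    tor_hv hcan hnormal hE (G.H_H A) (G.H_Vp B)
  have hVH : G.H (tor S nab (G.Vp A) (G.H B)) = 0 := by
    rw [tor_anti, H_neg', tor_hv hcan hnormal hE (G.H_H B) (G.H_Vp A), neg_zero]
  have hVV : G.H (tor S nab (G.Vp A) (G.Vp B)) = 0 :=
    tor_vv hcan hint (G.H_Vp A) (G.H_Vp B)
  have expand : tor S nab A B
      = tor S nab (G.H A) (G.H B) + tor S nab (G.H A) (G.Vp B)
        + tor S nab (G.Vp A) (G.H B) + tor S nab (G.Vp A) (G.Vp B) := by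
    have tadd1 : ∀ P Q R : V, tor S nab (P + Q) R = tor S nab P R + tor S nab Q R := by
      intro P Q R; unfold tor
      rw [hcan.conn.addX, hcan.conn.addY, S.bracket_addl]; abel
    have tadd2 : ∀ P Q R : V, tor S nab P (Q + R) = tor S nab P Q + tor S nab P R := by
      intro P Q R
      rw [tor_anti, tadd1, tor_anti Q P, tor_anti R P]; abel
    conv_lhs => rw [← hdecA, ← hdecB]
    rw [tadd1, tadd2, tadd2]; abel
  rw [expand, G.H_add, G.H_add, G.H_add, hHH, hHV, hVH, hVV]
  simp

end Canonical

section Bianchi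

set_option linter.unusedSectionVars false

variable {S : VFCalc F V} {nab : V → V → V} (hc : IsConnection S nab)
include hc

omit hc in
lemma double_bracket_sum (A B C : V) :
    S.bracket (S.bracket A B) C + S.bracket (S.bracket B C) A
      + S.bracket (S.bracket C A) B = 0 := by
  rw [S.bracket_antisymm (S.bracket A B) C, S.bracket_antisymm (S.bracket B C) A,
    S.bracket_antisymm (S.bracket C A) B]
  have hj := S.jacobi A B C
  rw [show -S.bracket C (S.bracket A B) + -S.bracket A (S.bracket B C)
        + -S.bracket B (S.bracket C A)
      = -(S.bracket A (S.bracket B C) + S.bracket B (S.bracket C A)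
        + S.bracket C (S.bracket A B)) from by abel, hj, neg_zero]

omit hc in
lemma double_bracket_expr (A B C : V) :
    S.bracket (S.bracket C A) B
      = -S.bracket (S.bracket A B) C - S.bracket (S.bracket B C) A := by
  have hb := double_bracket_sum (S := S) A B C
  rw [show S.bracket (S.bracket C A) B
      = (S.bracket (S.bracket A B) C + S.bracket (S.bracket B C) A
        + S.bracket (S.bracket C A) B) - S.bracket (S.bracket A B) C
        - S.bracket (S.bracket B C) A from by abel, hb]
  abel

/-- First Bianchi identity with torsion. -/
lemma bianchi1_vec (A B C : V) :
    curv S nab A B C + curv S nab B C A + curv S nab C A B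
      = (tor S nab (tor S nab A B) C + nabTor S nab A B C)
        + (tor S nab (tor S nab B C) A + nabTor S nab B C A)
        + (tor S nab (tor S nab C A) B + nabTor S nab C A B) := by
  have hb3 := double_bracket_expr (S := S) A B C
  simp only [curv, tor, nabTor, nab_sub1 hc, nab_sub2 hc, S.bracket_subl]
  rw [hb3, S.bracket_antisymm (nab B A) C, S.bracket_antisymm (nab C B) A,
    S.bracket_antisymm (nab A C) B]
  abel

/-- Second Bianchi identity with torsion. -/
lemma bianchi2_vec (X Y Z W : V) :
    (nab X (curv S nab Y Z W) - curv S nab (nab X Y) Z W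
        - curv S nab Y (nab X Z) W - curv S nab Y Z (nab X W))
      + (nab Y (curv S nab Z X W) - curv S nab (nab Y Z) X W
        - curv S nab Z (nab Y X) W - curv S nab Z X (nab Y W))
      + (nab Z (curv S nab X Y W) - curv S nab (nab Z X) Y W
        - curv S nab X (nab Z Y) W - curv S nab X Y (nab Z W))
      + curv S nab (tor S nab X Y) Z W + curv S nab (tor S nab Y Z) X W
      + curv S nab (tor S nab Z X) Y W = 0 := by
  have hb3 := double_bracket_expr (S := S) X Y Z
  have hnb3 : nab (S.bracket (S.bracket Z X) Y) W
      = -nab (S.bracket (S.bracket X Y) Z) W - nab (S.bracket (S.bracket Y Z) X) W := by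
    rw [hb3, show -S.bracket (S.bracket X Y) Z - S.bracket (S.bracket Y Z) X
        = (0 : V) - S.bracket (S.bracket X Y) Z - S.bracket (S.bracket Y Z) X from by abel,
      nab_sub1 hc, nab_sub1 hc, nab_zero1 hc]
    abel
  simp only [curv, tor, nab_sub1 hc, nab_sub2 hc, S.bracket_subl]
  rw [hnb3, S.bracket_antisymm (nab Y X) Z, S.bracket_antisymm (nab Z Y) X,
    S.bracket_antisymm (nab X Z) Y, nab_neg1 hc, nab_neg1 hc, nab_neg1 hc]
  abel

end Bianchi

section Bianchi2

set_option linter.unusedSectionVars false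

variable {S : VFCalc F V} {G : TwoGrading S} {nab : V → V → V}
  (hcan : IsCanonical S G nab)
include hcan

lemma nabTor_vert (hnormal : NormalV S G) (hint : IntegrableV S G)
    {d : ℕ} {E : Fin d → V} (hE : IsHFrame S G E) (A B C : V) :
    G.H (nabTor S nab A B C) = 0 := by
  unfold nabTor
  rw [H_sub', H_sub', nab_vert hcan A (tor_vert hcan hnormal hint hE B C),
    tor_vert hcan hnormal hint hE, tor_vert hcan hnormal hint hE]
  abel

/-- The horizontal first Bianchi identity: valid as soon as the last slot is
horizontal, since all torsion is vertical. -/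
lemma bianchi1_horiz (hnormal : NormalV S G) (hint : IntegrableV S G)
    {d : ℕ} {E : Fin d → V} (hE : IsHFrame S G E) (A B C W : V) (hW : G.H W = W) :
    Rm S nab A B C W + Rm S nab B C A W + Rm S nab C A B W = 0 := by
  have hv := bianchi1_vec hcan.conn A B C
  have hvert : G.H ((tor S nab (tor S nab A B) C + nabTor S nab A B C)
      + (tor S nab (tor S nab B C) A + nabTor S nab B C A)
      + (tor S nab (tor S nab C A) B + nabTor S nab C A B)) = 0 := by
    rw [G.H_add, G.H_add, G.H_add, G.H_add, G.H_add,
      tor_vert hcan hnormal hint hE, tor_vert hcan hnormal hint hE,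
      tor_vert hcan hnormal hint hE,
      nabTor_vert hcan hnormal hint hE, nabTor_vert hcan hnormal hint hE,
      nabTor_vert hcan hnormal hint hE]
    abel
  have hg : S.g ((curv S nab A B C + curv S nab B C A) + curv S nab C A B) W = 0 := by
    rw [show (curv S nab A B C + curv S nab B C A) + curv S nab C A B
        = curv S nab A B C + curv S nab B C A + curv S nab C A B from rfl, hv]
    exact g_vert_horiz G hvert hW
  unfold Rm
  rw [← S.g_addl, ← S.g_addl]
  exact hg

end Bianchi2

/-- The covariant derivative of the `(4,0)` curvature tensor, `(∇_A Rm)(Y,Z,W,U)`. -/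
def covRm (S : VFCalc F V) (nab : V → V → V) (A Y Z W U : V) : F :=
  S.D A (Rm S nab Y Z W U) - Rm S nab (nab A Y) Z W U - Rm S nab Y (nab A Z) W U
    - Rm S nab Y Z (nab A W) U - Rm S nab Y Z W (nab A U)

section Bianchi3

set_option linter.unusedSectionVars false

variable {S : VFCalc F V} {G : TwoGrading S} {nab : V → V → V}
  (hcan : IsCanonical S G nab)
include hcan

/-- The scalar second Bianchi identity. -/
lemma bianchi2_scalar (X Y Z W U : V) :
    covRm S nab X Y Z W U + covRm S nab Y Z X W U + covRm S nab Z X Y W U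
      + Rm S nab (tor S nab X Y) Z W U + Rm S nab (tor S nab Y Z) X W U
      + Rm S nab (tor S nab Z X) Y W U = 0 := by
  have hv := bianchi2_vec hcan.conn X Y Z W
  have hg := congrArg (fun v => S.g v U) hv
  simp only [S.g_addl, S.g_subl, S.g_zerol] at hg
  have hm1 := hcan.metric X (curv S nab Y Z W) U
  have hm2 := hcan.metric Y (curv S nab Z X W) U
  have hm3 := hcan.metric Z (curv S nab X Y W) U
  simp only [covRm, Rm]
  linear_combination hg + hm1 + hm2 + hm3

/-- Curvature with vertical third slot is vertical. -/
lemma curv_vert3 {T : V} (A B : V) (hT : G.H T = 0) : G.H (curv S nab A B T) = 0 := by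
  unfold curv
  rw [H_sub', H_sub', nab_vert hcan A (nab_vert hcan B hT),
    nab_vert hcan B (nab_vert hcan A hT), nab_vert hcan _ hT]
  abel

/-- `Rm(T,·,·,·)` is symmetric in the middle two slots for vertical `T`. -/
lemma Rm_symm_mid (hnormal : NormalV S G) (hint : IntegrableV S G)
    {d : ℕ} {E : Fin d → V} (hE : IsHFrame S G E)
    {T A B W : V} (hT : G.H T = 0) (hA : G.H A = A) (hB : G.H B = B)
    (hW : G.H W = W) :
    Rm S nab T A B W = Rm S nab T B A W := by
  have hb := bianchi1_horiz hcan hnormal hint hE T A B W hW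
  have hz : Rm S nab A B T W = 0 := g_vert_horiz G (curv_vert3 hcan A B hT) hW
  have h12 := Rm_antisymm12 hcan.conn B T A W
  linear_combination hb - hz - h12

/-- Key vanishing: `Rm(T,A,B,C) = 0` for vertical `T` and horizontal `A,B,C`. -/
lemma Rm_vert1_zero (hnormal : NormalV S G) (hint : IntegrableV S G)
    {d : ℕ} {E : Fin d → V} (hE : IsHFrame S G E)
    {T A B C : V} (hT : G.H T = 0) (hA : G.H A = A) (hB : G.H B = B)
    (hC : G.H C = C) :
    Rm S nab T A B C = 0 := by
  have p := Rm_antisymm34 hcan.metric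
  have hneg : Rm S nab T A B C = - Rm S nab T A B C := by
    calc Rm S nab T A B C = - Rm S nab T A C B := p T A B C
    _ = - Rm S nab T C A B := by
        rw [Rm_symm_mid hcan hnormal hint hE hT hA hC hB]
    _ = Rm S nab T C B A := by rw [p T C A B, neg_neg]
    _ = Rm S nab T B C A := by rw [Rm_symm_mid hcan hnormal hint hE hT hC hB hA]
    _ = - Rm S nab T B A C := p T B C A
    _ = - Rm S nab T A B C := by rw [Rm_symm_mid hcan hnormal hint hE hT hB hA hC]
  exact CBI.half_cancel _ (by linear_combination hneg)

/-- Pair symmetry of `Rm` on horizontal fields. -/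
lemma Rm_pair_symm (hnormal : NormalV S G) (hint : IntegrableV S G)
    {d : ℕ} {E : Fin d → V} (hE : IsHFrame S G E)
    {X Y Z W : V} (hX : G.H X = X) (hY : G.H Y = Y) (hZ : G.H Z = Z)
    (hW : G.H W = W) :
    Rm S nab X Y Z W = Rm S nab Z W X Y := by
  have p := Rm_antisymm34 hcan.metric
  have q := Rm_antisymm12 hcan.conn
  have b1 := bianchi1_horiz hcan hnormal hint hE X Y Z W hW
  have b2 := bianchi1_horiz hcan hnormal hint hE Y Z W X hX
  have b3 := bianchi1_horiz hcan hnormal hint hE Z W X Y hY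
  have b4 := bianchi1_horiz hcan hnormal hint hE W X Y Z hZ
  have ha : (Rm S nab X Y Z W - Rm S nab Z W X Y)
      + (Rm S nab X Y Z W - Rm S nab Z W X Y) = 0 := by
    linear_combination b1 + b2 - b3 - b4 - p Z W Y X - p Y Z X W - q Z X Y W
      + p X Z Y W - q W Y Z X + p Y W Z X + p X Y Z W + p W X Z Y
  have := CBI.half_cancel _ ha
  linear_combination this

/-- Frame-contraction of an antisymmetric connection coefficient against a
bilinear expression kills the correction terms. -/
lemma sum_corr {d : ℕ} {E : Fin d → V} (hE : IsHFrame S G E)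
    (φ : V → V → F)
    (h1a : ∀ v w u, φ (v + w) u = φ v u + φ w u)
    (h1s : ∀ (f : F) (v u : V), φ (f • v) u = f * φ v u)
    (h2a : ∀ u v w, φ u (v + w) = φ u v + φ u w)
    (h2s : ∀ (f : F) (u v : V), φ u (f • v) = f * φ u v)
    (C : V) :
    ∑ k, (φ (nab C (E k)) (E k) + φ (E k) (nab C (E k))) = 0 := by
  classical
  set ω : Fin d → Fin d → F := fun k i => S.g (nab C (E k)) (E i) with hωdef
  have hexp : ∀ k, nab C (E k) = ∑ i, ω k i • E i :=
    fun k => hE.2.2 _ (nab_horiz hcan C (hE.1 k))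
  have hl : ∀ k, φ (nab C (E k)) (E k) = ∑ i, ω k i * φ (E i) (E k) := by
    intro k
    rw [hexp k]
    refine Eq.trans
      (map_sum (AddMonoidHom.mk' (fun v => φ v (E k)) (fun a b => h1a a b (E k)))
        (fun i => ω k i • E i) Finset.univ) ?_
    exact Finset.sum_congr rfl (fun i _ => h1s _ _ _)
  have hr : ∀ k, φ (E k) (nab C (E k)) = ∑ i, ω k i * φ (E k) (E i) := by
    intro k
    rw [hexp k]
    refine Eq.trans
      (map_sum (AddMonoidHom.mk' (fun v => φ (E k) v) (fun a b => h2a (E k) a b))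
        (fun i => ω k i • E i) Finset.univ) ?_
    exact Finset.sum_congr rfl (fun i _ => h2s _ _ _)
  have hωanti : ∀ k i, ω k i + ω i k = 0 := by
    intro k i
    have hm := hcan.metric C (E k) (E i)
    have hD0 : S.D C (S.g (E k) (E i)) = 0 := by
      rw [hE.2.1 k i]
      split_ifs
      · exact S.D_one C
      · exact S.D_zero C
    have hgs := S.g_symm (E k) (nab C (E i))
    show S.g (nab C (E k)) (E i) + S.g (nab C (E i)) (E k) = 0
    linear_combination -hm + hD0 - hgs
  have hT : ∑ k, (φ (nab C (E k)) (E k) + φ (E k) (nab C (E k)))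
      = ∑ k, ∑ i, ω k i * (φ (E i) (E k) + φ (E k) (E i)) := by
    refine Finset.sum_congr rfl (fun k _ => ?_)
    rw [hl k, hr k, ← Finset.sum_add_distrib]
    exact Finset.sum_congr rfl (fun i _ => by ring)
  rw [hT]
  have hswap : ∑ k, ∑ i, ω k i * (φ (E i) (E k) + φ (E k) (E i))
      = ∑ k, ∑ i, ω i k * (φ (E k) (E i) + φ (E i) (E k)) :=
    Finset.sum_comm
  have hTT : (∑ k, ∑ i, ω k i * (φ (E i) (E k) + φ (E k) (E i)))
      + (∑ k, ∑ i, ω k i * (φ (E i) (E k) + φ (E k) (E i))) = 0 := by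
    nth_rewrite 2 [hswap]
    rw [← Finset.sum_add_distrib]
    refine Finset.sum_eq_zero (fun k _ => ?_)
    rw [← Finset.sum_add_distrib]
    refine Finset.sum_eq_zero (fun i _ => ?_)
    linear_combination (φ (E i) (E k) + φ (E k) (E i)) * hωanti k i
  exact CBI.half_cancel _ hTT

end Bianchi3

section RicLin

set_option linter.unusedSectionVars false

variable {S : VFCalc F V} {nab : V → V → V} (hc : IsConnection S nab)
  {d : ℕ} {E : Fin d → V}
include hc

lemma Ric_add1 (A B C : V) :
    Ric S nab E (A + B) C = Ric S nab E A C + Ric S nab E B C := by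
  unfold Ric
  rw [← Finset.sum_add_distrib]
  exact Finset.sum_congr rfl (fun k _ => Rm_add1 hc _ _ _ _ _)

lemma Ric_smul1 (f : F) (A C : V) :
    Ric S nab E (f • A) C = f * Ric S nab E A C := by
  unfold Ric
  rw [Finset.mul_sum]
  exact Finset.sum_congr rfl (fun k _ => Rm_smul1 hc _ _ _ _ _)

lemma Ric_add2 (C A B : V) :
    Ric S nab E C (A + B) = Ric S nab E C A + Ric S nab E C B := by
  unfold Ric
  rw [← Finset.sum_add_distrib]
  exact Finset.sum_congr rfl (fun k _ => Rm_add4 hc _ _ _ _ _)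

lemma Ric_smul2 (f : F) (C A : V) :
    Ric S nab E C (f • A) = f * Ric S nab E C A := by
  unfold Ric
  rw [Finset.mul_sum]
  exact Finset.sum_congr rfl (fun k _ => Rm_smul4 hc _ _ _ _ _)

end RicLin

end VFCalc

end CBI

open VFCalc in
/-- **Statement 9 (contracted Bianchi identity).** If `VM` is normal and
integrable, then `∇_X S₀ = 2 Σ_j (∇Rc)(E_j, X, E_j)` for every horizontal `X`,
where `(∇Rc)(A,B,C) = (∇_C Rc)(A,B)` and `S₀ = Σ_i Rc(E_i,E_i)`. -/
theorem contracted_bianchi_identity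
    {F : Type*} {V : Type*} [CommRing F] [Algebra ℝ F]
    [AddCommGroup V] [Module F V]
    (S : VFCalc F V) (G : TwoGrading S) (nab : V → V → V)
    (hcan : IsCanonical S G nab)
    (hnormal : NormalV S G) (hint : IntegrableV S G)
    {d : ℕ} (E : Fin d → V) (hE : IsHFrame S G E) :
    ∀ X, G.H X = X →
      S.D X (∑ i, Ric S nab E (E i) (E i))
        = 2 * ∑ j, nabRic S nab E (E j) X (E j) := by
  intro X hX
  obtain ⟨hEh, hδ, hsp⟩ := hE
  have hE' : IsHFrame S G E := ⟨hEh, hδ, hsp⟩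
  have hc := hcan.conn
  have hp34 := Rm_antisymm34 hcan.metric
  -- Step 1: the doubly contracted second Bianchi identity, torsion terms killed
  have hjk : ∀ j k, covRm S nab X (E j) (E k) (E k) (E j)
      + covRm S nab (E j) (E k) X (E k) (E j)
      + covRm S nab (E k) X (E j) (E k) (E j) = 0 := by
    intro j k
    have hb := bianchi2_scalar hcan X (E j) (E k) (E k) (E j)
    have ht1 : Rm S nab (tor S nab X (E j)) (E k) (E k) (E j) = 0 :=
      Rm_vert1_zero hcan hnormal hint hE'
        (tor_vert hcan hnormal hint hE' _ _) (hEh k) (hEh k) (hEh j)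
    have ht2 : Rm S nab (tor S nab (E j) (E k)) X (E k) (E j) = 0 :=
      Rm_vert1_zero hcan hnormal hint hE'
        (tor_vert hcan hnormal hint hE' _ _) hX (hEh k) (hEh j)
    have ht3 : Rm S nab (tor S nab (E k) X) (E j) (E k) (E j) = 0 :=
      Rm_vert1_zero hcan hnormal hint hE'
        (tor_vert hcan hnormal hint hE' _ _) (hEh j) (hEh k) (hEh j)
    linear_combination hb - ht1 - ht2 - ht3
  -- Step 2: first contracted family equals ∇_X S₀
  have hA1 : ∑ j, ∑ k, covRm S nab X (E j) (E k) (E k) (E j)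
      = S.D X (∑ i, Ric S nab E (E i) (E i)) := by
    have hDS : S.D X (∑ i, Ric S nab E (E i) (E i))
        = ∑ j, ∑ k, S.D X (Rm S nab (E j) (E k) (E k) (E j)) := by
      rw [S.D_sum]
      exact Finset.sum_congr rfl (fun j _ => S.D_sum X Finset.univ _)
    have hcorr1 : ∑ j, (Ric S nab E (nab X (E j)) (E j)
        + Ric S nab E (E j) (nab X (E j))) = 0 :=
      sum_corr hcan hE' (Ric S nab E)
        (fun v w u => Ric_add1 hc v w u) (fun f v u => Ric_smul1 hc f v u)
        (fun u v w => Ric_add2 hc u v w) (fun f u v => Ric_smul2 hc f u v) X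
    have hc14 : (∑ j, ∑ k, Rm S nab (nab X (E j)) (E k) (E k) (E j))
        + (∑ j, ∑ k, Rm S nab (E j) (E k) (E k) (nab X (E j))) = 0 := by
      rw [← Finset.sum_add_distrib]
      exact hcorr1
    have hcorr2 : ∑ k, ((∑ j, Rm S nab (E j) (nab X (E k)) (E k) (E j))
        + (∑ j, Rm S nab (E j) (E k) (nab X (E k)) (E j))) = 0 :=
      sum_corr hcan hE' (fun v w => ∑ j, Rm S nab (E j) v w (E j))
        (fun v w u => by
          rw [← Finset.sum_add_distrib]
          exact Finset.sum_congr rfl (fun j _ => Rm_add2 hc _ _ _ _ _))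
        (fun f v u => by
          rw [Finset.mul_sum]
          exact Finset.sum_congr rfl (fun j _ => Rm_smul2 hc _ _ _ _ _))
        (fun u v w => by
          rw [← Finset.sum_add_distrib]
          exact Finset.sum_congr rfl (fun j _ => Rm_add3 hc _ _ _ _ _))
        (fun f u v => by
          rw [Finset.mul_sum]
          exact Finset.sum_congr rfl (fun j _ => Rm_smul3 hc _ _ _ _ _)) X
    have hc23 : (∑ j, ∑ k, Rm S nab (E j) (nab X (E k)) (E k) (E j))
        + (∑ j, ∑ k, Rm S nab (E j) (E k) (nab X (E k)) (E j)) = 0 := by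
      have e1 : (∑ j, ∑ k, Rm S nab (E j) (nab X (E k)) (E k) (E j))
          = ∑ k, ∑ j, Rm S nab (E j) (nab X (E k)) (E k) (E j) := Finset.sum_comm
      have e2 : (∑ j, ∑ k, Rm S nab (E j) (E k) (nab X (E k)) (E j))
          = ∑ k, ∑ j, Rm S nab (E j) (E k) (nab X (E k)) (E j) := Finset.sum_comm
      rw [e1, e2, ← Finset.sum_add_distrib]
      exact hcorr2
    simp only [covRm, Finset.sum_sub_distrib]
    linear_combination -hDS - hc14 - hc23
  -- Step 3: second contracted family
  have hA2 : ∑ j, ∑ k, covRm S nab (E j) (E k) X (E k) (E j)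
      = ∑ j, -(nabRic S nab E X (E j) (E j)) := by
    refine Finset.sum_congr rfl (fun j _ => ?_)
    have hcorr : ∑ k, (Rm S nab (nab (E j) (E k)) X (E k) (E j)
        + Rm S nab (E k) X (nab (E j) (E k)) (E j)) = 0 :=
      sum_corr hcan hE' (fun v w => Rm S nab v X w (E j))
        (fun v w u => Rm_add1 hc _ _ _ _ _) (fun f v u => Rm_smul1 hc _ _ _ _ _)
        (fun u v w => Rm_add3 hc _ _ _ _ _) (fun f u v => Rm_smul3 hc _ _ _ _ _)
        (E j)
    have hterm : ∀ k, covRm S nab (E j) (E k) X (E k) (E j)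
        = (-(S.D (E j) (Rm S nab X (E k) (E k) (E j)))
            + Rm S nab (nab (E j) X) (E k) (E k) (E j)
            + Rm S nab X (E k) (E k) (nab (E j) (E j)))
          - (Rm S nab (nab (E j) (E k)) X (E k) (E j)
            + Rm S nab (E k) X (nab (E j) (E k)) (E j)) := by
      intro k
      have ha := Rm_antisymm12 hc (E k) X (E k) (E j)
      have hD := congrArg (S.D (E j)) ha
      rw [S.D_neg] at hD
      have hb := Rm_antisymm12 hc (E k) (nab (E j) X) (E k) (E j)
      have hcc := Rm_antisymm12 hc (E k) X (E k) (nab (E j) (E j))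
      simp only [covRm]
      linear_combination hD - hb - hcc
    rw [Finset.sum_congr rfl (fun k _ => hterm k), Finset.sum_sub_distrib, hcorr,
      sub_zero]
    have hDsum : S.D (E j) (∑ k, Rm S nab X (E k) (E k) (E j))
        = ∑ k, S.D (E j) (Rm S nab X (E k) (E k) (E j)) := S.D_sum _ _ _
    simp only [Finset.sum_add_distrib, Finset.sum_neg_distrib, nabRic, Ric]
    linear_combination hDsum
  -- Step 4: third contracted family
  have hA3 : ∑ j, ∑ k, covRm S nab (E k) X (E j) (E k) (E j)
      = ∑ k, -(nabRic S nab E X (E k) (E k)) := by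
    have e0 : (∑ j, ∑ k, covRm S nab (E k) X (E j) (E k) (E j))
        = ∑ k, ∑ j, covRm S nab (E k) X (E j) (E k) (E j) := Finset.sum_comm
    rw [e0]
    refine Finset.sum_congr rfl (fun k _ => ?_)
    have hcorr : ∑ j, (Rm S nab X (nab (E k) (E j)) (E k) (E j)
        + Rm S nab X (E j) (E k) (nab (E k) (E j))) = 0 :=
      sum_corr hcan hE' (fun v w => Rm S nab X v (E k) w)
        (fun v w u => Rm_add2 hc _ _ _ _ _) (fun f v u => Rm_smul2 hc _ _ _ _ _)
        (fun u v w => Rm_add4 hc _ _ _ _ _) (fun f u v => Rm_smul4 hc _ _ _ _ _)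
        (E k)
    have hterm : ∀ j, covRm S nab (E k) X (E j) (E k) (E j)
        = (-(S.D (E k) (Rm S nab X (E j) (E j) (E k)))
            + Rm S nab (nab (E k) X) (E j) (E j) (E k)
            + Rm S nab X (E j) (E j) (nab (E k) (E k)))
          - (Rm S nab X (nab (E k) (E j)) (E k) (E j)
            + Rm S nab X (E j) (E k) (nab (E k) (E j))) := by
      intro j
      have ha := hp34 X (E j) (E k) (E j)
      have hD := congrArg (S.D (E k)) ha
      rw [S.D_neg] at hD
      have hb := hp34 (nab (E k) X) (E j) (E k) (E j)
      have hcc := hp34 X (E j) (nab (E k) (E k)) (E j)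
      simp only [covRm]
      linear_combination hD - hb - hcc
    rw [Finset.sum_congr rfl (fun j _ => hterm j), Finset.sum_sub_distrib, hcorr,
      sub_zero]
    have hDsum : S.D (E k) (∑ j, Rm S nab X (E j) (E j) (E k))
        = ∑ j, S.D (E k) (Rm S nab X (E j) (E j) (E k)) := S.D_sum _ _ _
    simp only [Finset.sum_add_distrib, Finset.sum_neg_distrib, nabRic, Ric]
    linear_combination hDsum
  -- Step 5: combine
  have h0 : (∑ j, ∑ k, covRm S nab X (E j) (E k) (E k) (E j))
      + (∑ j, ∑ k, covRm S nab (E j) (E k) X (E k) (E j))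
      + (∑ j, ∑ k, covRm S nab (E k) X (E j) (E k) (E j)) = 0 := by
    rw [← Finset.sum_add_distrib, ← Finset.sum_add_distrib]
    refine Finset.sum_eq_zero (fun j _ => ?_)
    rw [← Finset.sum_add_distrib, ← Finset.sum_add_distrib]
    exact Finset.sum_eq_zero (fun k _ => hjk j k)
  rw [hA1, hA2, hA3] at h0
  simp only [Finset.sum_neg_distrib] at h0
  -- Step 6: symmetry of the Ricci tensor on horizontal fields
  have hRicSymm : ∀ A B : V, G.H A = A → G.H B = B →
      Ric S nab E A B = Ric S nab E B A := by
    intro A B hA hB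
    unfold Ric
    refine Finset.sum_congr rfl (fun k _ => ?_)
    have h1 := Rm_pair_symm hcan hnormal hint hE' hA (hEh k) (hEh k) hB
    have h2 := Rm_antisymm12 hc (E k) B A (E k)
    have h3 := hp34 B (E k) A (E k)
    linear_combination h1 + h2 - h3
  have hnr : ∀ j, nabRic S nab E X (E j) (E j) = nabRic S nab E (E j) X (E j) := by
    intro j
    unfold nabRic
    rw [hRicSymm X (E j) hX (hEh j),
      hRicSymm (nab (E j) X) (E j) (nab_horiz hcan _ hX) (hEh j),
      hRicSymm X (nab (E j) (E j)) hX (nab_horiz hcan _ (hEh j))]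
    ring
  have hs : (∑ j, nabRic S nab E X (E j) (E j))
      = ∑ j, nabRic S nab E (E j) X (E j) :=
    Finset.sum_congr rfl (fun j _ => hnr j)
  linear_combination h0 + 2 * hs
end

section
/- Let (M,J,η) be a strictly pseudoconvex pseudohermitian manifold with characteristic (Reeb) vector field T (η(T)=1, T⌟dη=0), horizontal bundle HM = ker η, and Levi metric g(A,B) = dη(A,JB) + η(A)η(B). Then the 0-normality condition ⟨[Y,T],X⟩ = -⟨[T,JY],JX⟩ for all horizontal X, Y is equivalent to Tanaka's normality condition [T, JY] = J[T,Y] for all horizontal Y. -/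
namespace VFCalc

variable {F : Type*} {V : Type*} [CommRing F] [Algebra ℝ F]
  [AddCommGroup V] [Module F V]

/-- The exterior derivative of a 1-form `η` evaluated on vector fields:
`dη(A,B) = A η(B) - B η(A) - η([A,B])`. -/
def deta (S : VFCalc F V) (η : V → F) (A B : V) : F :=
  S.D A (η B) - S.D B (η A) - η (S.bracket A B)

end VFCalc

open VFCalc in
/-- **Statement 12.** On a strictly pseudoconvex pseudohermitian manifold with
Reeb field `T`, horizontal bundle `ker η` and Levi metric
`g(A,B) = dη(A,JB) + η(A)η(B)`, the `0`-normality condition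
`⟨[Y,T],X⟩ = -⟨[T,JY],JX⟩` (all horizontal `X,Y`) is equivalent to Tanaka's
normality condition `[T,JY] = J[T,Y]` (all horizontal `Y`). -/
theorem tanaka_normality_equivalence
    {F : Type*} {V : Type*} [CommRing F] [Algebra ℝ F]
    [AddCommGroup V] [Module F V]
    (S : VFCalc F V) (J : V → V) (T : V) (η : V → F)
    (hJadd : ∀ X Y, J (X + Y) = J X + J Y)
    (hJsmul : ∀ (f : F) (X : V), J (f • X) = f • J X)
    (hηadd : ∀ X Y, η (X + Y) = η X + η Y)
    (hηsmul : ∀ (f : F) (X : V), η (f • X) = f * η X)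
    (hηT : η T = 1) (hJT : J T = 0)
    (hJJ : ∀ X, η X = 0 → J (J X) = -X)
    (hJhor : ∀ X, η (J X) = 0)
    (hreeb : ∀ X, deta S η T X = 0)
    (hLevi : ∀ A B, S.g A B = deta S η A (J B) + η A * η B)
    (hnd : ∀ Z, η Z = 0 → (∀ X, η X = 0 → S.g Z X = 0) → Z = 0) :
    (∀ X Y, η X = 0 → η Y = 0 →
        S.g (S.bracket Y T) X = -S.g (S.bracket T (J Y)) (J X))
      ↔ (∀ Y, η Y = 0 → S.bracket T (J Y) = J (S.bracket T Y)) := by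
  -- Basic derivation facts
  have hD0 : ∀ X : V, S.D X (0:F) = 0 := by
    intro X
    have h := S.D_add X 0 0
    rw [add_zero] at h
    exact (left_eq_add.mp h)
  have hD1 : ∀ X : V, S.D X (1:F) = 0 := by
    intro X
    have h := S.D_mul X 1 1
    simp only [one_mul] at h
    exact (left_eq_add.mp h)
  have hDneg : ∀ (X : V) (f : F), S.D X (-f) = -S.D X f := by
    intro X f
    have h := S.D_add X f (-f)
    rw [add_neg_cancel, hD0] at h
    linear_combination -h
  have hD0X : ∀ f : F, S.D (0:V) f = 0 := by
    intro f
    have h := S.D_addX 0 0 f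
    rw [add_zero] at h
    exact (left_eq_add.mp h)
  have hDnegX : ∀ (X : V) (f : F), S.D (-X) f = -S.D X f := by
    intro X f
    have h := S.D_addX X (-X) f
    rw [add_neg_cancel, hD0X] at h
    linear_combination -h
  have hηneg : ∀ X : V, η (-X) = -η X := by
    intro X
    rw [← neg_one_smul F X, hηsmul]; ring
  have hbrneg : ∀ A B : V, S.bracket A (-B) = -S.bracket A B := by
    intro A B
    rw [← neg_one_smul F B, S.bracket_leibniz]
    rw [hDneg, hD1, neg_zero, zero_smul, add_zero, neg_one_smul]
  have hhor : ∀ X, η X = 0 → η (S.bracket T X) = 0 := by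
    intro X hX
    have h := hreeb X
    unfold VFCalc.deta at h
    rw [hX, hηT, hD0, hD1] at h
    linear_combination -h
  have detaAnti : ∀ A B, deta S η A B = -deta S η B A := by
    intro A B
    unfold VFCalc.deta
    rw [S.bracket_antisymm A B, hηneg]
    ring
  have detaSwap : ∀ A B, deta S η A (J B) = deta S η B (J A) := by
    intro A B
    linear_combination S.g_symm A B - hLevi A B + hLevi B A
  have detaNegR : ∀ A B, deta S η A (-B) = -deta S η A B := by
    intro A B
    unfold VFCalc.deta
    rw [hbrneg, hηneg, hηneg, hDneg, hDnegX]
    ring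
  have inv : ∀ A B, η A = 0 → deta S η (J A) (J B) = -deta S η B A := by
    intro A B hA
    rw [detaSwap (J A) B, hJJ A hA, detaNegR]
  have gnegl : ∀ A B, S.g (-A) B = -S.g A B := by
    intro A B
    rw [← neg_one_smul F A, S.g_smull]; ring
  have gnegr : ∀ A B, S.g A (-B) = -S.g A B := by
    intro A B
    rw [S.g_symm, gnegl, S.g_symm]
  have gJleft : ∀ A B, η A = 0 → η B = 0 → S.g (J A) B = -S.g A (J B) := by
    intro A B hA hB
    have e1 : S.g (J A) B = deta S η (J A) (J B) := by
      rw [hLevi, hJhor A]; ring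
    have e2 : S.g A (J B) = deta S η A (J (J B)) := by
      rw [hLevi, hJhor B]; ring
    rw [e1, e2, hJJ B hB, detaNegR, inv A B hA]
    linear_combination -detaAnti A B
  have gJJ : ∀ A B, η A = 0 → η B = 0 → S.g (J A) (J B) = S.g A B := by
    intro A B hA hB
    have h := gJleft A (J B) hA (hJhor B)
    rw [hJJ B hB, gnegr] at h
    linear_combination h
  constructor
  · intro H Y hY
    set Z := S.bracket T (J Y) - J (S.bracket T Y) with hZ
    have hZη : η Z = 0 := by
      rw [hZ, sub_eq_add_neg, hηadd, hηneg, hhor (J Y) (hJhor Y), hJhor]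
      ring
    have hZg : ∀ X, η X = 0 → S.g Z X = 0 := by
      intro X hX
      have hH := H X (J Y) hX (hJhor Y)
      rw [hJJ Y hY, hbrneg, gnegl, S.bracket_antisymm (J Y) T, gnegl] at hH
      have hA : S.g (S.bracket T (J Y)) X = -S.g (S.bracket T Y) (J X) := by
        linear_combination -hH
      have hB : S.g (J (S.bracket T Y)) X = -S.g (S.bracket T Y) (J X) :=
        gJleft _ _ (hhor Y hY) hX
      have hsplit : S.g Z X
          = S.g (S.bracket T (J Y)) X - S.g (J (S.bracket T Y)) X := by
        rw [hZ, sub_eq_add_neg, S.g_addl, gnegl]; ring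
      rw [hsplit, hA, hB]; ring
    have hZ0 : Z = 0 := hnd Z hZη hZg
    have := sub_eq_zero.mp (hZ ▸ hZ0)
    exact this
  · intro N X Y hX hY
    rw [S.bracket_antisymm Y T, gnegl, N Y hY, gJJ _ _ (hhor Y hY) hX]
end

section
/- Let (M,J,η) be a strictly pseudoconvex pseudohermitian manifold with Reeb field T and Tanaka-Webster connection ∇. Then the torsion symmetry ⟨Tor(T,X), Y⟩ = ⟨Tor(T,Y), X⟩ holds for all horizontal vector fields X, Y; consequently the Tanaka-Webster connection coincides with the canonical basic connection of the associated sRC-structure. -/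
open VFCalc in
/-- **Statement 13.** The Tanaka-Webster connection of a strictly pseudoconvex
pseudohermitian manifold satisfies the torsion symmetry
`⟨Tor(T,X),Y⟩ = ⟨Tor(T,Y),X⟩` for horizontal `X,Y`; consequently it satisfies
all the defining properties of the canonical basic connection of the
associated sRC-structure. -/
theorem tanaka_webster_is_canonical
    {F : Type*} {V : Type*} [CommRing F] [Algebra ℝ F]
    [AddCommGroup V] [Module F V]
    (S : VFCalc F V) (J : V → V) (T : V) (η : V → F)
    (hJadd : ∀ X Y, J (X + Y) = J X + J Y)
    (hJsmul : ∀ (f : F) (X : V), J (f • X) = f • J X)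
    (hηadd : ∀ X Y, η (X + Y) = η X + η Y)
    (hηsmul : ∀ (f : F) (X : V), η (f • X) = f * η X)
    (hηT : η T = 1) (hJT : J T = 0)
    (hJJ : ∀ X, η X = 0 → J (J X) = -X)
    (hJhor : ∀ X, η (J X) = 0)
    (hreeb : ∀ X, deta S η T X = 0)
    (hLevi : ∀ A B, S.g A B = deta S η A (J B) + η A * η B)
    (nab : V → V → V) (hconn : IsConnection S nab)
    (hηpar : ∀ X Y, S.D X (η Y) = η (nab X Y))
    (hJpar : ∀ X Y, nab X (J Y) = J (nab X Y))
    (hdetapar : ∀ X A B,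
      S.D X (deta S η A B) = deta S η (nab X A) B + deta S η A (nab X B))
    (htorHH : ∀ X Y, η X = 0 → η Y = 0 → tor S nab X Y = deta S η X Y • T)
    (htorTJ : ∀ X, tor S nab T (J X) = -J (tor S nab T X)) :
    (∀ X Y, η X = 0 → η Y = 0 →
        S.g (tor S nab T X) Y = S.g (tor S nab T Y) X) ∧
    (∀ G : TwoGrading S, (∀ X, G.Vp X = η X • T) → IsCanonical S G nab) := by

  -- basic facts about the derivation
  have D_one : ∀ X : V, S.D X 1 = 0 := by
    intro X
    have h := S.D_mul X 1 1
    rw [one_mul, one_mul] at h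
    exact (left_eq_add.mp h)
  have D_zero : ∀ X : V, S.D X 0 = 0 := by
    intro X
    have h := S.D_add X 0 0
    rw [add_zero] at h
    exact (left_eq_add.mp h)
  have D_neg : ∀ (X : V) (f : F), S.D X (-f) = -S.D X f := by
    intro X f
    have h := S.D_add X f (-f)
    rw [add_neg_cancel, D_zero] at h
    exact eq_neg_of_add_eq_zero_right h.symm
  have D_zeroX : ∀ f : F, S.D (0 : V) f = 0 := by
    intro f
    have h := S.D_smulX 0 0 f
    rw [zero_smul, zero_mul] at h
    exact h
  -- basic facts about η
  have η_zero : η (0 : V) = 0 := by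
    have h := hηsmul 0 0
    rw [zero_smul, zero_mul] at h
    exact h
  have η_neg : ∀ X, η (-X) = -η X := by
    intro X
    have h := hηsmul (-1) X
    rw [neg_one_smul, neg_one_mul] at h
    exact h
  have η_sub : ∀ X Y, η (X - Y) = η X - η Y := by
    intro X Y
    rw [sub_eq_add_neg, hηadd, η_neg, sub_eq_add_neg]
  -- basic facts about J
  have J_zero : J (0 : V) = 0 := by
    have h := hJsmul 0 0
    rw [zero_smul, zero_smul] at h
    exact h
  have J_neg : ∀ X, J (-X) = -J X := by
    intro X
    have h := hJsmul (-1) X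
    rw [neg_one_smul, neg_one_smul] at h
    exact h
  have J_sub : ∀ X Y, J (X - Y) = J X - J Y := by
    intro X Y
    rw [sub_eq_add_neg, hJadd, J_neg, sub_eq_add_neg]
  -- basic facts about the bracket
  have br_zero_right : ∀ X : V, S.bracket X 0 = 0 := by
    intro X
    simpa using S.bracket_leibniz X 0 0
  have br_zero_left : ∀ X : V, S.bracket 0 X = 0 := by
    intro X
    rw [S.bracket_antisymm, br_zero_right, neg_zero]
  have br_neg_right : ∀ X Y, S.bracket X (-Y) = -S.bracket X Y := by
    intro X Y
    simpa [neg_one_smul, D_neg, D_one] using S.bracket_leibniz X (-1) Y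
  have half_smul : (algebraMap ℝ F (1 / 2)) * 2 = 1 := by
    rw [show (2 : F) = algebraMap ℝ F 2 from (map_ofNat (algebraMap ℝ F) 2).symm,
      ← map_mul]
    norm_num
  have v_half : ∀ v : V, v + v = 0 → v = 0 := by
    intro v hv
    have h2 : (2 : F) • v = 0 := by rw [two_smul]; exact hv
    calc v = ((algebraMap ℝ F (1 / 2)) * 2) • v := by rw [half_smul, one_smul]
      _ = (algebraMap ℝ F (1 / 2)) • ((2 : F) • v) := by rw [mul_smul]
      _ = 0 := by rw [h2, smul_zero]
  have brTT : S.bracket T T = 0 := by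
    apply v_half
    have h := S.bracket_antisymm T T
    nth_rewrite 1 [h]
    exact neg_add_cancel _
  -- basic facts about the connection
  have nab_zero : ∀ X : V, nab X 0 = 0 := by
    intro X
    simpa [D_zero] using hconn.leibniz X 0 0
  have nab_neg : ∀ X Y, nab X (-Y) = -nab X Y := by
    intro X Y
    simpa [neg_one_smul, D_neg, D_one] using hconn.leibniz X (-1) Y
  have nab_sub : ∀ X Y Z, nab X (Y - Z) = nab X Y - nab X Z := by
    intro X Y Z
    rw [sub_eq_add_neg, hconn.addY, nab_neg, sub_eq_add_neg]
  have nabT : ∀ X : V, nab X T = 0 := by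
    intro X
    have hη : η (nab X T) = 0 := by rw [← hηpar, hηT]; exact D_one X
    have hJn : J (nab X T) = 0 := by
      have h := hJpar X T
      rw [hJT, nab_zero] at h
      exact h.symm
    have h2 := hJJ _ hη
    rw [hJn, J_zero] at h2
    exact neg_eq_zero.mp h2.symm
  -- basic facts about deta
  have deta_antisymm : ∀ A B, deta S η A B = -deta S η B A := by
    intro A B
    simp only [deta]
    rw [S.bracket_antisymm B A, η_neg]
    ring
  have deta_zerol : ∀ B, deta S η (0 : V) B = 0 := by
    intro B
    simp only [deta]
    rw [D_zeroX, η_zero, D_zero, br_zero_left, η_zero]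
    ring
  have deta_addl : ∀ A A' B, deta S η (A + A') B = deta S η A B + deta S η A' B := by
    intro A A' B
    simp only [deta]
    rw [S.D_addX, S.bracket_addl, hηadd A A', hηadd (S.bracket A B) (S.bracket A' B),
      S.D_add]
    ring
  have deta_negl : ∀ A B, deta S η (-A) B = -deta S η A B := by
    intro A B
    have h := deta_addl A (-A) B
    rw [add_neg_cancel, deta_zerol] at h
    exact eq_neg_of_add_eq_zero_right h.symm
  have deta_subl : ∀ A A' B, deta S η (A - A') B = deta S η A B - deta S η A' B := by
    intro A A' B
    rw [sub_eq_add_neg, deta_addl, deta_negl, sub_eq_add_neg]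
  have ωJ : ∀ A B, deta S η A (J B) = -deta S η (J A) B := by
    intro A B
    have hs := S.g_symm A B
    rw [hLevi A B, hLevi B A] at hs
    have h : deta S η A (J B) = deta S η B (J A) := by linear_combination hs
    rw [h, deta_antisymm B (J A)]
  have ηbrT : ∀ A, η (S.bracket T A) = S.D T (η A) := by
    intro A
    have h := hreeb A
    simp only [deta] at h
    rw [hηT, D_one] at h
    linear_combination -h
  have tausimp : ∀ X : V, tor S nab T X = nab T X - S.bracket T X := by
    intro X
    simp only [tor]
    rw [nabT X, sub_zero]
  have ητ : ∀ X, η X = 0 → η (tor S nab T X) = 0 := by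
    intro X hX
    have h1 : η (nab T X) = 0 := by rw [← hηpar, hX, D_zero]
    have h2 : η (S.bracket T X) = 0 := by rw [ηbrT, hX, D_zero]
    rw [tausimp, η_sub, h1, h2, sub_zero]
  -- the key Jacobi identity consequence
  have star : ∀ X W, η X = 0 → η W = 0 →
      S.D T (deta S η X W) = deta S η (S.bracket T X) W - deta S η (S.bracket T W) X := by
    intro X W hX hW
    have ηbrTX : η (S.bracket T X) = 0 := by rw [ηbrT, hX, D_zero]
    have ηbrTW : η (S.bracket T W) = 0 := by rw [ηbrT, hW, D_zero]
    have hb : ∀ A B, η A = 0 → η B = 0 → η (S.bracket A B) = -deta S η A B := by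
      intro A B hA hB
      simp only [deta]
      rw [hA, hB, D_zero, D_zero]
      ring
    have jac := congrArg η (S.jacobi T X W)
    rw [hηadd, hηadd, η_zero] at jac
    rw [ηbrT (S.bracket X W)] at jac
    rw [hb X W hX hW] at jac
    rw [D_neg] at jac
    rw [S.bracket_antisymm W T, br_neg_right, η_neg] at jac
    rw [hb X (S.bracket T W) hX ηbrTW] at jac
    rw [hb W (S.bracket T X) hW ηbrTX] at jac
    rw [deta_antisymm X (S.bracket T W), deta_antisymm W (S.bracket T X)] at jac
    linear_combination -jac
  -- parallelism consequence
  have par : ∀ X Y, S.D T (deta S η Y (J X)) =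
      deta S η (nab T Y) (J X) + deta S η (nab T X) (J Y) := by
    intro X Y
    have h := hdetapar T Y (J X)
    rw [hJpar T X] at h
    have h2 : deta S η Y (J (nab T X)) = deta S η (nab T X) (J Y) := by
      rw [ωJ Y (nab T X), deta_antisymm (J Y) (nab T X), neg_neg]
    rw [h2] at h
    exact h
  -- consequence of the torsion identity Tor(T,JX) = -J Tor(T,X)
  have E : ∀ X : V, S.bracket T (J X) =
      J (nab T X) + J (nab T X) - J (S.bracket T X) := by
    intro X
    have h := htorTJ X
    rw [tausimp (J X), tausimp X] at h
    rw [J_sub] at h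
    rw [hJpar T X] at h
    have hb : S.bracket T (J X) =
        J (nab T X) - (J (nab T X) - S.bracket T (J X)) := by abel
    rw [h] at hb
    rw [hb]
    abel
  -- Part 1: the torsion symmetry
  have main : ∀ X Y, η X = 0 → η Y = 0 →
      S.g (tor S nab T X) Y = S.g (tor S nab T Y) X := by
    intro X Y hX hY
    rw [hLevi (tor S nab T X) Y, hLevi (tor S nab T Y) X]
    rw [ητ X hX, ητ Y hY, zero_mul, zero_mul, add_zero, add_zero]
    rw [tausimp X, tausimp Y, deta_subl, deta_subl]
    have h1 := star Y (J X) hY (hJhor X)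
    have h2 := par X Y
    have e1 : deta S η (J (nab T X)) Y = -deta S η (nab T X) (J Y) := by
      rw [ωJ (nab T X) Y, neg_neg]
    have e2 : deta S η (J (S.bracket T X)) Y = -deta S η (S.bracket T X) (J Y) := by
      rw [ωJ (S.bracket T X) Y, neg_neg]
    have h3 : deta S η (S.bracket T (J X)) Y
        = deta S η (S.bracket T X) (J Y)
          - deta S η (nab T X) (J Y) - deta S η (nab T X) (J Y) := by
      rw [E X, deta_subl, deta_addl, e1, e2]
      ring
    linear_combination h2 - h1 + h3
  refine ⟨main, ?_⟩
  -- Part 2: `nab` is the canonical connection of the sRC-structure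
  intro G hVp
  have hH : ∀ X, G.H X = X - η X • T := by
    intro X
    have h := G.sum_eq X
    rw [hVp] at h
    exact eq_sub_of_add_eq h
  have ηH : ∀ X, η (G.H X) = 0 := by
    intro X
    rw [hH, η_sub, hηsmul, hηT, mul_one, sub_self]
  have HT : G.H T = 0 := by rw [hH, hηT, one_smul, sub_self]
  have Vp_zero : G.Vp 0 = 0 := by rw [hVp, η_zero, zero_smul]
  have tor_anti : ∀ A B, tor S nab A B = -tor S nab B A := by
    intro A B
    simp only [tor]
    rw [S.bracket_antisymm A B]
    abel
  have nabTfT : ∀ f : F, nab T (f • T) = (S.D T f) • T := by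
    intro f
    rw [hconn.leibniz, nabT, smul_zero, zero_add]
  have brTfT : ∀ f : F, S.bracket T (f • T) = (S.D T f) • T := by
    intro f
    rw [S.bracket_leibniz, brTT, smul_zero, zero_add]
  have torTT : ∀ f h : F, tor S nab (f • T) (h • T) = 0 := by
    intro f h
    simp only [tor]
    rw [hconn.smulX f T (h • T), nabTfT h, hconn.smulX h T (f • T), nabTfT f,
      S.bracket_leibniz (f • T) h T, S.bracket_antisymm (f • T) T, brTfT f,
      S.D_smulX f T h, smul_smul, smul_smul, smul_neg, smul_smul]
    abel
  have torWfT : ∀ (W : V) (f : F), tor S nab W (f • T) = (-f) • tor S nab T W := by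
    intro W f
    simp only [tor]
    rw [nabT W, hconn.leibniz W f T, nabT W, hconn.smulX f T W,
      S.bracket_leibniz W f T, S.bracket_antisymm W T, smul_zero, zero_add,
      smul_neg, sub_zero, neg_smul, smul_sub]
    abel
  refine
    { conn := hconn
      metric := ?_
      parH := ?_
      torHH := ?_
      torVV := ?_
      torSymH := ?_
      torSymV := ?_ }
  · intro X Y Z
    rw [hLevi Y Z, hLevi (nab X Y) Z, hLevi Y (nab X Z)]
    rw [S.D_add, S.D_mul, hdetapar X Y (J Z), hJpar X Z, hηpar X Y, hηpar X Z]
    ring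
  · intro X Y
    rw [hH Y, hH (nab X Y), nab_sub, hconn.leibniz, nabT, smul_zero, zero_add,
      hηpar]
  · intro X Y
    rw [htorHH _ _ (ηH X) (ηH Y), G.H_smul, HT, smul_zero]
  · intro X Y
    rw [hVp X, hVp Y, torTT, Vp_zero]
  · intro X Z T'
    rw [hVp T', torWfT, torWfT, S.g_smull, S.g_smull,
      main (G.H X) (G.H Z) (ηH X) (ηH Z)]
  · intro X Z T'
    have key : ∀ A B : V, η B = 0 → S.g (tor S nab T B) (η A • T) = 0 := by
      intro A B hB
      rw [S.g_symm, S.g_smull, hLevi, hreeb, ητ B hB, hηT]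
      ring
    have e : ∀ f : F, tor S nab (f • T) (G.H T') = f • tor S nab T (G.H T') := by
      intro f
      rw [tor_anti, torWfT, neg_smul, neg_neg]
    rw [hVp X, hVp Z, e (η X), e (η Z), S.g_smull, S.g_smull,
      key Z (G.H T') (ηH T'), key X (G.H T') (ηH T'), mul_zero, mul_zero]
end
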